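/- arXiv:2304.11969 — 8 statements merged into one kernel-verified Lean document; each statement's English description precedes it below -/
import Mathlib

section
/- In the front-door structural causal model, for every value t of T with P(T = t) > 0 and every value y of Y, the interventional probability satisfies the front-door adjustment formula: P(Y = y | do(T = t)) = Σ_z P(Z = z | T = t) · Σ_{t'} P(Y = y | T = t', Z = z) · P(T = t'), where the inner sum ranges over values t' with P(T = t', Z = z) > 0 (equivalently, under the assumption that P(T = t', Z = z) > 0 for all t', z). -/
/-!
Write `q_{t'}(z) = P(f_Z(t', E_Z) = z)` and `Y_z = f_Y(z, U, E_Y)` for the potential outcome.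
Both `T` and `Y_z` are functions of `(U, E_T, E_Y)`, which is independent of `E_Z`, so
`P(T = t', Z = z) = P(T = t') q_{t'}(z)` and `P(Y = y, T = t', Z = z) = P(T = t', Y_z = y) q_{t'}(z)`.
Hence `P(Z = z | T = t) = q_t(z)` and the inner sum of the formula collapses to
`∑_{t'} P(T = t', Y_z = y) = P(Y_z = y)`, while the same independence splits the
interventional probability as `∑_z q_t(z) P(Y_z = y)`.
-/

open MeasureTheory

/-- Conditional probability `P(A | B) = P(A ∩ B) / P(B)`. -/
noncomputable def condP {Ω : Type*} [MeasurableSpace Ω] (μ : Measure Ω)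
    (A B : Set Ω) : ENNReal :=
  μ (A ∩ B) / μ B

open Set

namespace MeasureTheory

variable {Ω β : Type*} [MeasurableSpace Ω] {μ : Measure Ω} {f : Ω → β}

theorem measure_eq_tsum_preimage_singleton_inter [Countable β]
    (hf : ∀ b, MeasurableSet (f ⁻¹' {b})) (s : Set Ω) :
    μ s = ∑' b, μ (f ⁻¹' {b} ∩ s) := by
  simp_rw [← Measure.restrict_apply (hf _), ← measure_iUnion (pairwise_disjoint_fiber f) hf,
    ← preimage_iUnion, iUnion_of_singleton, preimage_univ, Measure.restrict_apply_univ]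

theorem measure_eq_sum_preimage_singleton_inter [Fintype β]
    (hf : ∀ b, MeasurableSet (f ⁻¹' {b})) (s : Set Ω) :
    μ s = ∑ b, μ (f ⁻¹' {b} ∩ s) := by
  rw [measure_eq_tsum_preimage_singleton_inter hf, tsum_fintype]

end MeasureTheory

namespace FrontDoor

variable {Ω 𝒰 ℰT ℰZ ℰY : Type*} [MeasurableSpace Ω] [MeasurableSpace 𝒰]
  [MeasurableSpace ℰT] [MeasurableSpace ℰZ] [MeasurableSpace ℰY]

def JointlyIndep (μ : Measure Ω) (U : Ω → 𝒰) (ET : Ω → ℰT) (EZ : Ω → ℰZ) (EY : Ω → ℰY) :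
    Prop :=
  ∀ (A : Set 𝒰) (B : Set ℰT) (C : Set ℰZ) (D : Set ℰY),
    MeasurableSet A → MeasurableSet B → MeasurableSet C → MeasurableSet D →
    μ (U ⁻¹' A ∩ ET ⁻¹' B ∩ EZ ⁻¹' C ∩ EY ⁻¹' D)
      = μ (U ⁻¹' A) * μ (ET ⁻¹' B) * μ (EZ ⁻¹' C) * μ (EY ⁻¹' D)

variable [Countable 𝒰] [MeasurableSingletonClass 𝒰] {μ : Measure Ω} [IsProbabilityMeasure μ]
  {U : Ω → 𝒰} {ET : Ω → ℰT} {EZ : Ω → ℰZ} {EY : Ω → ℰY}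

theorem JointlyIndep.measure_inter_preimage_eq_mul (hIndep : JointlyIndep μ U ET EZ EY)
    (hU : Measurable U) {B : 𝒰 → Set ℰT} {D : 𝒰 → Set ℰY} (hB : ∀ u, MeasurableSet (B u))
    (hD : ∀ u, MeasurableSet (D u)) {C : Set ℰZ} (hC : MeasurableSet C) :
    μ ({ω | ET ω ∈ B (U ω) ∧ EY ω ∈ D (U ω)} ∩ EZ ⁻¹' C)
      = μ {ω | ET ω ∈ B (U ω) ∧ EY ω ∈ D (U ω)} * μ (EZ ⁻¹' C) := by
  -- Independence is only known on rectangles; on each fibre of `U` the event is one.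
  have hfiber : ∀ C, MeasurableSet C → μ ({ω | ET ω ∈ B (U ω) ∧ EY ω ∈ D (U ω)} ∩ EZ ⁻¹' C)
      = ∑' u, μ (U ⁻¹' {u}) * μ (ET ⁻¹' B u) * μ (EY ⁻¹' D u) * μ (EZ ⁻¹' C) := by
    intro C hC
    rw [measure_eq_tsum_preimage_singleton_inter fun u => hU (measurableSet_singleton u)]
    refine tsum_congr fun u => ?_
    have hset : U ⁻¹' {u} ∩ ({ω | ET ω ∈ B (U ω) ∧ EY ω ∈ D (U ω)} ∩ EZ ⁻¹' C)
        = U ⁻¹' {u} ∩ ET ⁻¹' B u ∩ EZ ⁻¹' C ∩ EY ⁻¹' D u := by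
      ext ω
      simp only [mem_inter_iff, mem_preimage, mem_ofPred_eq]
      constructor
      · rintro ⟨rfl, ⟨hb, hd⟩, hc⟩; exact ⟨⟨⟨rfl, hb⟩, hc⟩, hd⟩
      · rintro ⟨⟨⟨rfl, hb⟩, hc⟩, hd⟩; exact ⟨rfl, ⟨hb, hd⟩, hc⟩
    rw [hset, hIndep _ _ _ _ (measurableSet_singleton u) (hB u) hC (hD u)]
    ring
  have hS := hfiber univ MeasurableSet.univ
  simp only [preimage_univ, inter_univ, measure_univ, mul_one] at hS
  rw [hfiber C hC, hS, ENNReal.tsum_mul_right]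

variable {𝒯 𝒵 𝒴 : Type*} [MeasurableSpace 𝒯] [MeasurableSpace 𝒵] [MeasurableSpace 𝒴]
  {fT : 𝒰 × ℰT → 𝒯} {fZ : 𝒯 × ℰZ → 𝒵} {fY : 𝒵 × 𝒰 × ℰY → 𝒴}
  {T : Ω → 𝒯} {Z : Ω → 𝒵} {Y : Ω → 𝒴}

theorem measure_T_eq_and_Z_eq [MeasurableSingletonClass 𝒯] [MeasurableSingletonClass 𝒵]
    (hIndep : JointlyIndep μ U ET EZ EY) (hU : Measurable U)
    (hfT : Measurable fT) (hfZ : Measurable fZ)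
    (hT : ∀ ω, T ω = fT (U ω, ET ω)) (hZ : ∀ ω, Z ω = fZ (T ω, EZ ω)) (t : 𝒯) (z : 𝒵) :
    μ {ω | T ω = t ∧ Z ω = z} = μ {ω | T ω = t} * μ (EZ ⁻¹' {e | fZ (t, e) = z}) := by
  have hset : {ω | T ω = t ∧ Z ω = z} = {ω | T ω = t} ∩ EZ ⁻¹' {e | fZ (t, e) = z} := by
    ext ω
    simp only [mem_ofPred_eq, mem_inter_iff, mem_preimage, hZ]
    exact and_congr_right fun h => by rw [h]
  have := hIndep.measure_inter_preimage_eq_mul (B := fun u => {e | fT (u, e) = t})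
    (D := fun _ => univ) (C := {e | fZ (t, e) = z}) hU
    (fun u => by measurability)
    (fun _ => MeasurableSet.univ) (by measurability)
  rw [hset]
  simpa only [hT, mem_ofPred_eq, mem_univ, and_true] using this

theorem measure_Y_eq_inter_T_eq_and_Z_eq [MeasurableSingletonClass 𝒯]
    [MeasurableSingletonClass 𝒵] [MeasurableSingletonClass 𝒴]
    (hIndep : JointlyIndep μ U ET EZ EY) (hU : Measurable U)
    (hfT : Measurable fT) (hfZ : Measurable fZ) (hfY : Measurable fY)
    (hT : ∀ ω, T ω = fT (U ω, ET ω)) (hZ : ∀ ω, Z ω = fZ (T ω, EZ ω))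
    (hY : ∀ ω, Y ω = fY (Z ω, U ω, EY ω)) (t : 𝒯) (z : 𝒵) (y : 𝒴) :
    μ ({ω | Y ω = y} ∩ {ω | T ω = t ∧ Z ω = z})
      = μ {ω | T ω = t ∧ fY (z, U ω, EY ω) = y} * μ (EZ ⁻¹' {e | fZ (t, e) = z}) := by
  have hset : {ω | Y ω = y} ∩ {ω | T ω = t ∧ Z ω = z}
      = {ω | T ω = t ∧ fY (z, U ω, EY ω) = y} ∩ EZ ⁻¹' {e | fZ (t, e) = z} := by
    ext ω
    simp only [mem_ofPred_eq, mem_inter_iff, mem_preimage, hY]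
    constructor
    · rintro ⟨hy, ht, hz⟩
      exact ⟨⟨ht, hz ▸ hy⟩, ht ▸ hZ ω ▸ hz⟩
    · rintro ⟨⟨ht, hy⟩, hz⟩
      have hz' : Z ω = z := (hZ ω).trans (ht ▸ hz)
      exact ⟨hz' ▸ hy, ht, hz'⟩
  have := hIndep.measure_inter_preimage_eq_mul (B := fun u => {e | fT (u, e) = t})
    (D := fun u => {e | fY (z, u, e) = y}) (C := {e | fZ (t, e) = z}) hU
    (fun u => by measurability)
    (fun u => by measurability)
    (by measurability)
  rw [hset]
  simpa only [hT, mem_ofPred_eq] using this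

theorem condP_Z_eq_T_eq [MeasurableSingletonClass 𝒯] [MeasurableSingletonClass 𝒵]
    (hIndep : JointlyIndep μ U ET EZ EY) (hU : Measurable U)
    (hfT : Measurable fT) (hfZ : Measurable fZ)
    (hT : ∀ ω, T ω = fT (U ω, ET ω)) (hZ : ∀ ω, Z ω = fZ (T ω, EZ ω)) {t : 𝒯}
    (ht : μ {ω | T ω = t} ≠ 0) (z : 𝒵) :
    condP μ {ω | Z ω = z} {ω | T ω = t} = μ (EZ ⁻¹' {e | fZ (t, e) = z}) := by
  rw [condP, inter_comm, ← ofPred_and, measure_T_eq_and_Z_eq hIndep hU hfT hfZ hT hZ,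
    mul_comm, ENNReal.mul_div_cancel_right ht (measure_ne_top _ _)]

theorem condP_Y_eq_mul_measure_T_eq [MeasurableSingletonClass 𝒯]
    [MeasurableSingletonClass 𝒵] [MeasurableSingletonClass 𝒴]
    (hIndep : JointlyIndep μ U ET EZ EY) (hU : Measurable U)
    (hfT : Measurable fT) (hfZ : Measurable fZ) (hfY : Measurable fY)
    (hT : ∀ ω, T ω = fT (U ω, ET ω)) (hZ : ∀ ω, Z ω = fZ (T ω, EZ ω))
    (hY : ∀ ω, Y ω = fY (Z ω, U ω, EY ω)) {t : 𝒯} {z : 𝒵}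
    (hpos : μ {ω | T ω = t ∧ Z ω = z} ≠ 0) (y : 𝒴) :
    condP μ {ω | Y ω = y} {ω | T ω = t ∧ Z ω = z} * μ {ω | T ω = t}
      = μ {ω | T ω = t ∧ fY (z, U ω, EY ω) = y} := by
  rw [measure_T_eq_and_Z_eq hIndep hU hfT hfZ hT hZ, mul_ne_zero_iff] at hpos
  rw [condP, measure_Y_eq_inter_T_eq_and_Z_eq hIndep hU hfT hfZ hfY hT hZ hY,
    measure_T_eq_and_Z_eq hIndep hU hfT hfZ hT hZ,
    ENNReal.mul_div_mul_right _ _ hpos.2 (measure_ne_top _ _),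
    ENNReal.div_mul_cancel hpos.1 (measure_ne_top _ _)]

theorem measure_do_eq_sum [Fintype 𝒵] [MeasurableSingletonClass 𝒵] [MeasurableSingletonClass 𝒴]
    (hIndep : JointlyIndep μ U ET EZ EY) (hU : Measurable U) (hEZ : Measurable EZ)
    (hfZ : Measurable fZ) (hfY : Measurable fY) (t : 𝒯) (y : 𝒴) :
    μ {ω | fY (fZ (t, EZ ω), U ω, EY ω) = y}
      = ∑ z, μ (EZ ⁻¹' {e | fZ (t, e) = z}) * μ {ω | fY (z, U ω, EY ω) = y} := by
  rw [measure_eq_sum_preimage_singleton_inter (f := fun ω => fZ (t, EZ ω))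
    fun z => by measurability]
  refine Finset.sum_congr rfl fun z _ => ?_
  have hset : (fun ω => fZ (t, EZ ω)) ⁻¹' {z} ∩ {ω | fY (fZ (t, EZ ω), U ω, EY ω) = y}
      = {ω | fY (z, U ω, EY ω) = y} ∩ EZ ⁻¹' {e | fZ (t, e) = z} := by
    ext ω
    simp only [mem_ofPred_eq, mem_inter_iff, mem_preimage, mem_singleton_iff]
    exact ⟨fun ⟨hz, hy⟩ => ⟨hz ▸ hy, hz⟩, fun ⟨hy, hz⟩ => ⟨hz, hz ▸ hy⟩⟩
  have := hIndep.measure_inter_preimage_eq_mul (B := fun _ => univ)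
    (D := fun u => {e | fY (z, u, e) = y}) (C := {e | fZ (t, e) = z}) hU
    (fun _ => MeasurableSet.univ)
    (fun u => by measurability)
    (by measurability)
  rw [hset, mul_comm]
  simpa only [mem_univ, true_and, mem_ofPred_eq] using this

end FrontDoor

open FrontDoor

theorem frontdoor_adjustment_general
    {Ω 𝒰 𝒯 𝒵 𝒴 ℰT ℰZ ℰY : Type*}
    [MeasurableSpace Ω] [MeasurableSpace 𝒰] [MeasurableSpace 𝒯] [MeasurableSpace 𝒵]
    [MeasurableSpace 𝒴] [MeasurableSpace ℰT] [MeasurableSpace ℰZ] [MeasurableSpace ℰY]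
    [Fintype 𝒰] [MeasurableSingletonClass 𝒰]
    [Fintype 𝒯] [MeasurableSingletonClass 𝒯]
    [Fintype 𝒵] [MeasurableSingletonClass 𝒵]
    [MeasurableSingletonClass 𝒴]
    (μ : Measure Ω) [IsProbabilityMeasure μ]
    (U : Ω → 𝒰) (ET : Ω → ℰT) (EZ : Ω → ℰZ) (EY : Ω → ℰY)
    (hU : Measurable U) (hET : Measurable ET) (hEZ : Measurable EZ)
    (fT : 𝒰 × ℰT → 𝒯) (fZ : 𝒯 × ℰZ → 𝒵) (fY : 𝒵 × 𝒰 × ℰY → 𝒴)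
    (hfT : Measurable fT) (hfZ : Measurable fZ) (hfY : Measurable fY)
    -- joint independence of U, E_T, E_Z, E_Y
    (hIndep : ∀ (A : Set 𝒰) (B : Set ℰT) (C : Set ℰZ) (D : Set ℰY),
      MeasurableSet A → MeasurableSet B → MeasurableSet C → MeasurableSet D →
      μ (U ⁻¹' A ∩ ET ⁻¹' B ∩ EZ ⁻¹' C ∩ EY ⁻¹' D)
        = μ (U ⁻¹' A) * μ (ET ⁻¹' B) * μ (EZ ⁻¹' C) * μ (EY ⁻¹' D))
    -- structural equations
    (T : Ω → 𝒯) (Z : Ω → 𝒵) (Y : Ω → 𝒴)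
    (hT : ∀ ω, T ω = fT (U ω, ET ω))
    (hZ : ∀ ω, Z ω = fZ (T ω, EZ ω))
    (hY : ∀ ω, Y ω = fY (Z ω, U ω, EY ω))
    -- positivity
    (hpos : ∀ (t' : 𝒯) (z : 𝒵), 0 < μ {ω | T ω = t' ∧ Z ω = z})
    (t : 𝒯) (ht : 0 < μ {ω | T ω = t}) (y : 𝒴) :
    μ {ω | fY (fZ (t, EZ ω), U ω, EY ω) = y}
      = ∑ z : 𝒵, condP μ {ω | Z ω = z} {ω | T ω = t}
          * ∑ t' : 𝒯, condP μ {ω | Y ω = y} {ω | T ω = t' ∧ Z ω = z}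
              * μ {ω | T ω = t'} := by
  have hTm : Measurable T := by
    rw [show T = fun ω => fT (U ω, ET ω) from funext hT]
    fun_prop
  rw [measure_do_eq_sum hIndep hU hEZ hfZ hfY]
  refine Finset.sum_congr rfl fun z _ => ?_
  rw [condP_Z_eq_T_eq hIndep hU hfT hfZ hT hZ ht.ne']
  congr 1
  calc μ {ω | fY (z, U ω, EY ω) = y}
      = ∑ t', μ (T ⁻¹' {t'} ∩ {ω | fY (z, U ω, EY ω) = y}) :=
        measure_eq_sum_preimage_singleton_inter (fun t' => hTm (measurableSet_singleton t')) _
    _ = ∑ t', condP μ {ω | Y ω = y} {ω | T ω = t' ∧ Z ω = z} * μ {ω | T ω = t'} :=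
        Finset.sum_congr rfl fun t' _ =>
          (condP_Y_eq_mul_measure_T_eq hIndep hU hfT hfZ hfY hT hZ hY (hpos t' z).ne' y).symm

/-- **Front-door adjustment formula.**
In the front-door structural causal model with unobserved confounder `U`, treatment
`T = f_T(U, E_T)`, front-door variable `Z = f_Z(T, E_Z)` and outcome `Y = f_Y(Z, U, E_Y)`,
where `U, E_T, E_Z, E_Y` are jointly independent, for every value `t` of `T` with
`P(T = t) > 0` and every value `y` of `Y`,
`P(Y = y | do(T = t)) = ∑_z P(Z = z | T = t) · ∑_{t'} P(Y = y | T = t', Z = z) · P(T = t')`,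
under the positivity assumption `P(T = t', Z = z) > 0` for all `t', z`.  Here
`P(Y = y | do(T = t)) := P(ω ↦ f_Y(f_Z(t, E_Z ω), U ω, E_Y ω) = y)`. -/
theorem frontdoor_adjustment
    {Ω 𝒰 𝒯 𝒵 𝒴 ℰT ℰZ ℰY : Type*}
    [MeasurableSpace Ω] [MeasurableSpace 𝒰] [MeasurableSpace 𝒯] [MeasurableSpace 𝒵]
    [MeasurableSpace 𝒴] [MeasurableSpace ℰT] [MeasurableSpace ℰZ] [MeasurableSpace ℰY]
    [Fintype 𝒰] [Nonempty 𝒰] [MeasurableSingletonClass 𝒰]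
    [Fintype 𝒯] [Nonempty 𝒯] [MeasurableSingletonClass 𝒯]
    [Fintype 𝒵] [Nonempty 𝒵] [MeasurableSingletonClass 𝒵]
    [Fintype 𝒴] [Nonempty 𝒴] [MeasurableSingletonClass 𝒴]
    (μ : Measure Ω) [IsProbabilityMeasure μ]
    (U : Ω → 𝒰) (ET : Ω → ℰT) (EZ : Ω → ℰZ) (EY : Ω → ℰY)
    (hU : Measurable U) (hET : Measurable ET) (hEZ : Measurable EZ) (hEY : Measurable EY)
    (fT : 𝒰 × ℰT → 𝒯) (fZ : 𝒯 × ℰZ → 𝒵) (fY : 𝒵 × 𝒰 × ℰY → 𝒴)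
    (hfT : Measurable fT) (hfZ : Measurable fZ) (hfY : Measurable fY)
    -- joint independence of U, E_T, E_Z, E_Y
    (hIndep : ∀ (A : Set 𝒰) (B : Set ℰT) (C : Set ℰZ) (D : Set ℰY),
      MeasurableSet A → MeasurableSet B → MeasurableSet C → MeasurableSet D →
      μ (U ⁻¹' A ∩ ET ⁻¹' B ∩ EZ ⁻¹' C ∩ EY ⁻¹' D)
        = μ (U ⁻¹' A) * μ (ET ⁻¹' B) * μ (EZ ⁻¹' C) * μ (EY ⁻¹' D))
    -- structural equations
    (T : Ω → 𝒯) (Z : Ω → 𝒵) (Y : Ω → 𝒴)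
    (hT : ∀ ω, T ω = fT (U ω, ET ω))
    (hZ : ∀ ω, Z ω = fZ (T ω, EZ ω))
    (hY : ∀ ω, Y ω = fY (Z ω, U ω, EY ω))
    -- positivity
    (hpos : ∀ (t' : 𝒯) (z : 𝒵), 0 < μ {ω | T ω = t' ∧ Z ω = z})
    (t : 𝒯) (ht : 0 < μ {ω | T ω = t}) (y : 𝒴) :
    μ {ω | fY (fZ (t, EZ ω), U ω, EY ω) = y}
      = ∑ z : 𝒵, condP μ {ω | Z ω = z} {ω | T ω = t}
          * ∑ t' : 𝒯, condP μ {ω | Y ω = y} {ω | T ω = t' ∧ Z ω = z}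
              * μ {ω | T ω = t'} :=
  frontdoor_adjustment_general μ U ET EZ EY hU hET hEZ fT fZ fY hfT hfZ hfY hIndep T Z Y hT hZ hY
    hpos t ht y
end

section
/- In the back-door structural causal model, for every value t of T and every value y of Y, the interventional probability satisfies the back-door adjustment formula: P(Y = y | do(T = t)) = Σ_w P(Y = y | T = t, W = w) · P(W = w), where the sum ranges over values w with P(T = t, W = w) > 0 (equivalently, under the assumption that P(T = t, W = w) > 0 for all w). -/
open MeasureTheory

/-!
Split both sides along the fibres `{W = w}`. On `{W = w}` the intervened outcome
`f_Y(t, W, E_Y) = y` is the event `E_Y ∈ C_w` with `C_w = {e | f_Y(t, w, e) = y}`, so its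
probability factorises as `P(W = w) · P(E_Y ∈ C_w)`. On the observational side,
`{T = t, W = w} = {W = w, E_T ∈ B_w}` with `B_w = {e | f_T(w, e) = t}` is an event of
`(W, E_T)`, on which `{Y = y}` is again `E_Y ∈ C_w`; since `E_Y` is independent of `(W, E_T)`,
positivity gives `P(Y = y | T = t, W = w) = P(E_Y ∈ C_w)`.
-/

theorem measure_eq_sum_measure_preimage_singleton_inter {Ω β : Type*} [MeasurableSpace Ω]
    [MeasurableSpace β] [Fintype β] [MeasurableSingletonClass β] (μ : Measure Ω) {f : Ω → β}
    (hf : Measurable f) (S : Set Ω) : μ S = ∑ b, μ (f ⁻¹' {b} ∩ S) := by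
  have hfib : ∀ b ∈ Finset.univ, MeasurableSet (f ⁻¹' {b}) := fun b _ =>
    hf (measurableSet_singleton b)
  -- `S` need not be measurable: additivity is used for `μ.restrict S` on the measurable fibres.
  have := sum_measure_preimage_singleton (μ := μ.restrict S) Finset.univ hfib
  simp only [Finset.coe_univ, Set.preimage_univ, Measure.restrict_apply_univ] at this
  rw [← this]
  exact Finset.sum_congr rfl fun b hb => Measure.restrict_apply (hfib b hb)

theorem condP_congr_of_inter_eq {Ω : Type*} [MeasurableSpace Ω] (μ : Measure Ω)
    {A A' B : Set Ω} (h : A ∩ B = A' ∩ B) : condP μ A B = condP μ A' B := by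
  rw [condP, condP, h]

section IndepFun₃

variable {Ω α β γ : Type*} [MeasurableSpace Ω] [MeasurableSpace α] [MeasurableSpace β]
  [MeasurableSpace γ]

def IndepFun₃ (X : Ω → α) (U : Ω → β) (V : Ω → γ) (μ : Measure Ω) : Prop :=
  ∀ (A : Set α) (B : Set β) (C : Set γ), MeasurableSet A → MeasurableSet B → MeasurableSet C →
    μ (X ⁻¹' A ∩ U ⁻¹' B ∩ V ⁻¹' C) = μ (X ⁻¹' A) * μ (U ⁻¹' B) * μ (V ⁻¹' C)

variable {X : Ω → α} {U : Ω → β} {V : Ω → γ} {μ : Measure Ω} {A : Set α} {B : Set β} {C : Set γ}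

theorem IndepFun₃.measure_inter_preimage_fst_snd [IsProbabilityMeasure μ]
    (h : IndepFun₃ X U V μ) (hA : MeasurableSet A) (hB : MeasurableSet B) :
    μ (X ⁻¹' A ∩ U ⁻¹' B) = μ (X ⁻¹' A) * μ (U ⁻¹' B) := by
  simpa using h A B Set.univ hA hB MeasurableSet.univ

theorem IndepFun₃.measure_inter_preimage_fst_thd [IsProbabilityMeasure μ]
    (h : IndepFun₃ X U V μ) (hA : MeasurableSet A) (hC : MeasurableSet C) :
    μ (X ⁻¹' A ∩ V ⁻¹' C) = μ (X ⁻¹' A) * μ (V ⁻¹' C) := by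
  simpa using h A Set.univ C hA MeasurableSet.univ hC

theorem IndepFun₃.condP_preimage_thd [IsProbabilityMeasure μ] (h : IndepFun₃ X U V μ)
    (hA : MeasurableSet A) (hB : MeasurableSet B) (hC : MeasurableSet C)
    (hpos : μ (X ⁻¹' A ∩ U ⁻¹' B) ≠ 0) :
    condP μ (V ⁻¹' C) (X ⁻¹' A ∩ U ⁻¹' B) = μ (V ⁻¹' C) := by
  have hfin : μ (X ⁻¹' A ∩ U ⁻¹' B) ≠ ⊤ := measure_ne_top μ _
  rw [condP, Set.inter_comm, h A B C hA hB hC, ← h.measure_inter_preimage_fst_snd hA hB,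
    mul_comm, ENNReal.mul_div_cancel_right hpos hfin]

end IndepFun₃

theorem backdoor_adjustment_general
    {Ω 𝒲 𝒯 𝒴 ℰT ℰY : Type*}
    [MeasurableSpace Ω] [MeasurableSpace 𝒲] [MeasurableSpace 𝒯] [MeasurableSpace 𝒴]
    [MeasurableSpace ℰT] [MeasurableSpace ℰY]
    [Fintype 𝒲] [MeasurableSingletonClass 𝒲]
    [MeasurableSingletonClass 𝒯]
    [MeasurableSingletonClass 𝒴]
    (μ : Measure Ω) [IsProbabilityMeasure μ]
    (W : Ω → 𝒲) (ET : Ω → ℰT) (EY : Ω → ℰY)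
    (hW : Measurable W)
    (fT : 𝒲 × ℰT → 𝒯) (fY : 𝒯 × 𝒲 × ℰY → 𝒴)
    (hfT : Measurable fT) (hfY : Measurable fY)
    -- joint independence of W, E_T, E_Y
    (hIndep : ∀ (A : Set 𝒲) (B : Set ℰT) (C : Set ℰY),
      MeasurableSet A → MeasurableSet B → MeasurableSet C →
      μ (W ⁻¹' A ∩ ET ⁻¹' B ∩ EY ⁻¹' C)
        = μ (W ⁻¹' A) * μ (ET ⁻¹' B) * μ (EY ⁻¹' C))
    -- structural equations
    (T : Ω → 𝒯) (Y : Ω → 𝒴)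
    (hT : ∀ ω, T ω = fT (W ω, ET ω))
    (hY : ∀ ω, Y ω = fY (T ω, W ω, EY ω))
    (t : 𝒯) (y : 𝒴)
    -- positivity
    (hpos : ∀ w : 𝒲, 0 < μ {ω | T ω = t ∧ W ω = w}) :
    μ {ω | fY (t, W ω, EY ω) = y}
      = ∑ w : 𝒲, condP μ {ω | Y ω = y} {ω | T ω = t ∧ W ω = w}
          * μ {ω | W ω = w} := by
  have hindep : IndepFun₃ W ET EY μ := hIndep
  have hw (w : 𝒲) : MeasurableSet {w} := measurableSet_singleton w
  have hBw (w : 𝒲) : MeasurableSet {e : ℰT | fT (w, e) = t} :=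
    (hfT.comp measurable_prodMk_left) (measurableSet_singleton t)
  have hCw (w : 𝒲) : MeasurableSet {e : ℰY | fY (t, w, e) = y} :=
    (hfY.comp (measurable_prodMk_left.comp measurable_prodMk_left)) (measurableSet_singleton y)
  have hstratum (w : 𝒲) :
      {ω | T ω = t ∧ W ω = w} = W ⁻¹' {w} ∩ ET ⁻¹' {e | fT (w, e) = t} := by
    ext ω; simp only [Set.mem_ofPred_eq, Set.mem_inter_iff, Set.mem_preimage,
      Set.mem_singleton_iff, hT]; grind
  have houtcome (w : 𝒲) : {ω | Y ω = y} ∩ {ω | T ω = t ∧ W ω = w}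
      = EY ⁻¹' {e | fY (t, w, e) = y} ∩ {ω | T ω = t ∧ W ω = w} := by
    ext ω; simp only [Set.mem_ofPred_eq, Set.mem_inter_iff, Set.mem_preimage, hY]; grind
  have hdo (w : 𝒲) : W ⁻¹' {w} ∩ {ω | fY (t, W ω, EY ω) = y}
      = W ⁻¹' {w} ∩ EY ⁻¹' {e | fY (t, w, e) = y} := by
    ext ω; simp +contextual [and_congr_right_iff]
  calc μ {ω | fY (t, W ω, EY ω) = y}
      = ∑ w, μ (W ⁻¹' {w} ∩ {ω | fY (t, W ω, EY ω) = y}) :=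
        measure_eq_sum_measure_preimage_singleton_inter μ hW _
    _ = ∑ w, μ (EY ⁻¹' {e | fY (t, w, e) = y}) * μ (W ⁻¹' {w}) :=
        Finset.sum_congr rfl fun w _ => by
          rw [hdo, hindep.measure_inter_preimage_fst_thd (hw w) (hCw w), mul_comm]
    _ = _ := Finset.sum_congr rfl fun w _ => by
          have hpos' := hstratum w ▸ (hpos w).ne'
          rw [condP_congr_of_inter_eq μ (houtcome w), hstratum,
            hindep.condP_preimage_thd (hw w) (hBw w) (hCw w) hpos']
          rfl

/-- **Back-door adjustment formula.**
In the back-door structural causal model with observed confounder `W`, treatment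
`T = f_T(W, E_T)` and outcome `Y = f_Y(T, W, E_Y)`, where `W, E_T, E_Y` are jointly
independent, for every value `t` of `T` and every value `y` of `Y`,
`P(Y = y | do(T = t)) = ∑_w P(Y = y | T = t, W = w) · P(W = w)`,
under the positivity assumption `P(T = t, W = w) > 0` for all `w`.  Here
`P(Y = y | do(T = t)) := P(ω ↦ f_Y(t, W ω, E_Y ω) = y)`. -/
theorem backdoor_adjustment
    {Ω 𝒲 𝒯 𝒴 ℰT ℰY : Type*}
    [MeasurableSpace Ω] [MeasurableSpace 𝒲] [MeasurableSpace 𝒯] [MeasurableSpace 𝒴]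
    [MeasurableSpace ℰT] [MeasurableSpace ℰY]
    [Fintype 𝒲] [Nonempty 𝒲] [MeasurableSingletonClass 𝒲]
    [Fintype 𝒯] [Nonempty 𝒯] [MeasurableSingletonClass 𝒯]
    [Fintype 𝒴] [Nonempty 𝒴] [MeasurableSingletonClass 𝒴]
    (μ : Measure Ω) [IsProbabilityMeasure μ]
    (W : Ω → 𝒲) (ET : Ω → ℰT) (EY : Ω → ℰY)
    (hW : Measurable W) (hET : Measurable ET) (hEY : Measurable EY)
    (fT : 𝒲 × ℰT → 𝒯) (fY : 𝒯 × 𝒲 × ℰY → 𝒴)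
    (hfT : Measurable fT) (hfY : Measurable fY)
    -- joint independence of W, E_T, E_Y
    (hIndep : ∀ (A : Set 𝒲) (B : Set ℰT) (C : Set ℰY),
      MeasurableSet A → MeasurableSet B → MeasurableSet C →
      μ (W ⁻¹' A ∩ ET ⁻¹' B ∩ EY ⁻¹' C)
        = μ (W ⁻¹' A) * μ (ET ⁻¹' B) * μ (EY ⁻¹' C))
    -- structural equations
    (T : Ω → 𝒯) (Y : Ω → 𝒴)
    (hT : ∀ ω, T ω = fT (W ω, ET ω))
    (hY : ∀ ω, Y ω = fY (T ω, W ω, EY ω))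
    (t : 𝒯) (y : 𝒴)
    -- positivity
    (hpos : ∀ w : 𝒲, 0 < μ {ω | T ω = t ∧ W ω = w}) :
    μ {ω | fY (t, W ω, EY ω) = y}
      = ∑ w : 𝒲, condP μ {ω | Y ω = y} {ω | T ω = t ∧ W ω = w}
          * μ {ω | W ω = w} :=
  backdoor_adjustment_general μ W ET EY hW fT fY hfT hfY hIndep T Y hT hY t y hpos
end

section
/- In the front-door structural causal model, the causal effect of Z on Y is identified by back-door adjustment on T: for every value z of Z and every value y of Y, P(Y = y | do(Z = z)) = Σ_{t'} P(Y = y | T = t', Z = z) · P(T = t'), where P(Y = y | do(Z = z)) := P(ω ↦ f_Y(z, U(ω), E_Y(ω)) = y) and the sum ranges over values t' with P(T = t', Z = z) > 0 (equivalently, under the assumption that P(T = t', Z = z) > 0 for all t'). -/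
open MeasureTheory

/-! Conditioning on `T = t`, the event `Z = z` reduces to `E_Z ∈ {e | f_Z (t, e) = z}`, which is
independent of `(U, E_T, E_Y)` and so cancels from `P(Y = y | T = t, Z = z)`; on `Z = z` the outcome
`Y` is `f_Y (z, U, E_Y)`. Hence `P(Y = y | T = t, Z = z) P(T = t) = P(f_Y (z, U, E_Y) = y, T = t)`,
and summing over `t` gives the adjustment formula. Independence is only assumed on rectangles;
finiteness of `𝒰` splits the events involved into rectangles, one for each value of `U`. -/

open Set

theorem measure_eq_sum_inter_preimage_singleton {Ω ι : Type*} [MeasurableSpace Ω]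
    [MeasurableSpace ι] [Fintype ι] [MeasurableSingletonClass ι] (μ : Measure Ω)
    {g : Ω → ι} (hg : Measurable g) (S : Set Ω) :
    μ S = ∑ i, μ (S ∩ g ⁻¹' {i}) := by
  have hfib : ∀ i ∈ Finset.univ, MeasurableSet (g ⁻¹' {i}) :=
    fun i _ ↦ hg (measurableSet_singleton i)
  rw [← Measure.restrict_apply_univ, ← preimage_univ (f := g), ← Finset.coe_univ,
    ← sum_measure_preimage_singleton _ hfib]
  simp_rw [Measure.restrict_apply (hg (measurableSet_singleton _)), inter_comm]

theorem measure_inter_preimage_eq_mul_of_fiberwise {Ω α β γ δ : Type*} [MeasurableSpace Ω]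
    [MeasurableSpace α] [MeasurableSpace β] [MeasurableSpace γ] [MeasurableSpace δ]
    [Fintype α] [MeasurableSingletonClass α] (μ : Measure Ω) [IsProbabilityMeasure μ]
    {U : Ω → α} {V : Ω → β} {W : Ω → γ} {X : Ω → δ} (hU : Measurable U)
    (hIndep : ∀ (A : Set α) (B : Set β) (C : Set γ) (D : Set δ),
      MeasurableSet A → MeasurableSet B → MeasurableSet C → MeasurableSet D →
      μ (U ⁻¹' A ∩ V ⁻¹' B ∩ W ⁻¹' C ∩ X ⁻¹' D)
        = μ (U ⁻¹' A) * μ (V ⁻¹' B) * μ (W ⁻¹' C) * μ (X ⁻¹' D))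
    {B : α → Set β} {D : α → Set δ} (hB : ∀ u, MeasurableSet (B u))
    (hD : ∀ u, MeasurableSet (D u)) {C : Set γ} (hC : MeasurableSet C) :
    μ ({ω | V ω ∈ B (U ω) ∧ X ω ∈ D (U ω)} ∩ W ⁻¹' C)
      = μ {ω | V ω ∈ B (U ω) ∧ X ω ∈ D (U ω)} * μ (W ⁻¹' C) := by
  set S := {ω | V ω ∈ B (U ω) ∧ X ω ∈ D (U ω)}
  have hsplit : ∀ C', MeasurableSet C' → μ (S ∩ W ⁻¹' C')
      = ∑ u, μ (U ⁻¹' {u}) * μ (V ⁻¹' B u) * μ (W ⁻¹' C') * μ (X ⁻¹' D u) := by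
    intro C' hC'
    rw [measure_eq_sum_inter_preimage_singleton μ hU]
    refine Finset.sum_congr rfl fun u _ ↦ ?_
    rw [← hIndep _ _ _ _ (measurableSet_singleton u) (hB u) hC' (hD u)]
    congr 1
    ext ω
    simp only [S, mem_inter_iff, mem_ofPred_eq, mem_preimage, mem_singleton_iff]
    constructor
    · rintro ⟨⟨⟨hV, hX⟩, hW⟩, rfl⟩
      exact ⟨⟨⟨rfl, hV⟩, hW⟩, hX⟩
    · rintro ⟨⟨⟨rfl, hV⟩, hW⟩, hX⟩
      exact ⟨⟨⟨hV, hX⟩, hW⟩, rfl⟩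
  have hS : μ S = μ (S ∩ W ⁻¹' univ) := by rw [preimage_univ, inter_univ]
  rw [hS, hsplit C hC, hsplit _ MeasurableSet.univ, Finset.sum_mul]
  simp only [preimage_univ, measure_univ, mul_one]
  exact Finset.sum_congr rfl fun u _ ↦ by ring

theorem measure_inter_div_mul_eq_of_indep {Ω : Type*} [MeasurableSpace Ω] (μ : Measure Ω)
    [IsFiniteMeasure μ] {A B C : Set Ω} (hABC : μ (A ∩ B ∩ C) = μ (A ∩ B) * μ C)
    (hBC : μ (B ∩ C) = μ B * μ C) (hpos : μ (B ∩ C) ≠ 0) :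
    μ (A ∩ B ∩ C) / μ (B ∩ C) * μ B = μ (A ∩ B) := by
  obtain ⟨hB, hC⟩ := mul_ne_zero_iff.mp (hBC ▸ hpos)
  rw [hABC, hBC, ENNReal.mul_div_mul_right _ _ hC (measure_ne_top μ C),
    ENNReal.div_mul_cancel hB (measure_ne_top μ B)]

theorem condP_mul_measure_eq_measure_inter_of_frontdoor
    {Ω 𝒰 𝒯 𝒵 𝒴 ℰT ℰZ ℰY : Type*}
    [MeasurableSpace Ω] [MeasurableSpace 𝒰] [MeasurableSpace 𝒯] [MeasurableSpace 𝒵]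
    [MeasurableSpace 𝒴] [MeasurableSpace ℰT] [MeasurableSpace ℰZ] [MeasurableSpace ℰY]
    [Fintype 𝒰] [MeasurableSingletonClass 𝒰] [MeasurableSingletonClass 𝒯]
    [MeasurableSingletonClass 𝒵] [MeasurableSingletonClass 𝒴]
    (μ : Measure Ω) [IsProbabilityMeasure μ]
    {U : Ω → 𝒰} {ET : Ω → ℰT} {EZ : Ω → ℰZ} {EY : Ω → ℰY} (hU : Measurable U)
    {fT : 𝒰 × ℰT → 𝒯} {fZ : 𝒯 × ℰZ → 𝒵} {fY : 𝒵 × 𝒰 × ℰY → 𝒴}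
    (hfT : Measurable fT) (hfZ : Measurable fZ) (hfY : Measurable fY)
    (hIndep : ∀ (A : Set 𝒰) (B : Set ℰT) (C : Set ℰZ) (D : Set ℰY),
      MeasurableSet A → MeasurableSet B → MeasurableSet C → MeasurableSet D →
      μ (U ⁻¹' A ∩ ET ⁻¹' B ∩ EZ ⁻¹' C ∩ EY ⁻¹' D)
        = μ (U ⁻¹' A) * μ (ET ⁻¹' B) * μ (EZ ⁻¹' C) * μ (EY ⁻¹' D))
    {T : Ω → 𝒯} {Z : Ω → 𝒵} {Y : Ω → 𝒴}
    (hT : ∀ ω, T ω = fT (U ω, ET ω)) (hZ : ∀ ω, Z ω = fZ (T ω, EZ ω))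
    (hY : ∀ ω, Y ω = fY (Z ω, U ω, EY ω))
    {t : 𝒯} {z : 𝒵} {y : 𝒴} (hpos : 0 < μ {ω | T ω = t ∧ Z ω = z}) :
    condP μ {ω | Y ω = y} {ω | T ω = t ∧ Z ω = z} * μ {ω | T ω = t}
      = μ ({ω | fY (z, U ω, EY ω) = y} ∩ {ω | T ω = t}) := by
  set C := EZ ⁻¹' {e | fZ (t, e) = z}
  have hTZ : {ω | T ω = t ∧ Z ω = z} = {ω | T ω = t} ∩ C := by
    ext ω
    simp only [C, mem_inter_iff, mem_ofPred_eq, mem_preimage, hZ]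
    grind
  have hYTZ : {ω | Y ω = y} ∩ {ω | T ω = t ∧ Z ω = z}
      = {ω | fY (z, U ω, EY ω) = y} ∩ {ω | T ω = t} ∩ C := by
    ext ω
    simp only [C, mem_inter_iff, mem_ofPred_eq, mem_preimage, hY, hZ]
    grind
  have hT_fiberwise : {ω | T ω = t}
      = {ω | ET ω ∈ {e | fT (U ω, e) = t} ∧ EY ω ∈ (univ : Set ℰY)} := by
    ext ω
    simp [hT]
  have hYT_fiberwise : {ω | fY (z, U ω, EY ω) = y} ∩ {ω | T ω = t}
      = {ω | ET ω ∈ {e | fT (U ω, e) = t} ∧ EY ω ∈ {e | fY (z, U ω, e) = y}} := by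
    ext ω
    simp [hT, and_comm]
  have hBT : ∀ u, MeasurableSet {e | fT (u, e) = t} :=
    fun u ↦ hfT.comp measurable_prodMk_left (measurableSet_singleton t)
  have hCZ : MeasurableSet {e | fZ (t, e) = z} :=
    hfZ.comp measurable_prodMk_left (measurableSet_singleton z)
  have hDY : ∀ u, MeasurableSet {e | fY (z, u, e) = y} :=
    fun u ↦ (hfY.comp measurable_prodMk_left).comp measurable_prodMk_left
      (measurableSet_singleton y)
  rw [hTZ] at hpos
  rw [condP, hYTZ, hTZ]
  refine measure_inter_div_mul_eq_of_indep μ ?_ ?_ hpos.ne'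
  · rw [hYT_fiberwise]
    exact measure_inter_preimage_eq_mul_of_fiberwise μ hU hIndep hBT hDY hCZ
  · rw [hT_fiberwise]
    exact measure_inter_preimage_eq_mul_of_fiberwise μ hU hIndep hBT
      (fun _ ↦ MeasurableSet.univ) hCZ

theorem frontdoor_effect_Z_on_Y_general
    {Ω 𝒰 𝒯 𝒵 𝒴 ℰT ℰZ ℰY : Type*}
    [MeasurableSpace Ω] [MeasurableSpace 𝒰] [MeasurableSpace 𝒯] [MeasurableSpace 𝒵]
    [MeasurableSpace 𝒴] [MeasurableSpace ℰT] [MeasurableSpace ℰZ] [MeasurableSpace ℰY]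
    [Fintype 𝒰] [MeasurableSingletonClass 𝒰]
    [Fintype 𝒯] [MeasurableSingletonClass 𝒯]
    [MeasurableSingletonClass 𝒵]
    [MeasurableSingletonClass 𝒴]
    (μ : Measure Ω) [IsProbabilityMeasure μ]
    (U : Ω → 𝒰) (ET : Ω → ℰT) (EZ : Ω → ℰZ) (EY : Ω → ℰY)
    (hU : Measurable U) (hET : Measurable ET)
    (fT : 𝒰 × ℰT → 𝒯) (fZ : 𝒯 × ℰZ → 𝒵) (fY : 𝒵 × 𝒰 × ℰY → 𝒴)
    (hfT : Measurable fT) (hfZ : Measurable fZ) (hfY : Measurable fY)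
    -- joint independence of U, E_T, E_Z, E_Y
    (hIndep : ∀ (A : Set 𝒰) (B : Set ℰT) (C : Set ℰZ) (D : Set ℰY),
      MeasurableSet A → MeasurableSet B → MeasurableSet C → MeasurableSet D →
      μ (U ⁻¹' A ∩ ET ⁻¹' B ∩ EZ ⁻¹' C ∩ EY ⁻¹' D)
        = μ (U ⁻¹' A) * μ (ET ⁻¹' B) * μ (EZ ⁻¹' C) * μ (EY ⁻¹' D))
    -- structural equations
    (T : Ω → 𝒯) (Z : Ω → 𝒵) (Y : Ω → 𝒴)
    (hT : ∀ ω, T ω = fT (U ω, ET ω))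
    (hZ : ∀ ω, Z ω = fZ (T ω, EZ ω))
    (hY : ∀ ω, Y ω = fY (Z ω, U ω, EY ω))
    -- positivity
    (hpos : ∀ (t' : 𝒯) (z : 𝒵), 0 < μ {ω | T ω = t' ∧ Z ω = z})
    (z : 𝒵) (y : 𝒴) :
    μ {ω | fY (z, U ω, EY ω) = y}
      = ∑ t' : 𝒯, condP μ {ω | Y ω = y} {ω | T ω = t' ∧ Z ω = z}
          * μ {ω | T ω = t'} := by
  have hTm : Measurable T := funext hT ▸ hfT.comp (hU.prodMk hET)
  rw [measure_eq_sum_inter_preimage_singleton μ hTm]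
  refine Finset.sum_congr rfl fun t' _ ↦ ?_
  exact (condP_mul_measure_eq_measure_inter_of_frontdoor μ hU hfT hfZ hfY hIndep hT hZ hY
    (hpos t' z)).symm

/-- **Identification of `P(Y = y | do(Z = z))` in the front-door SCM.**
All back-door paths from `Z` to `Y` are blocked by `T`, so the causal effect of `Z` on
`Y` is identified by back-door adjustment on `T`: for every value `z` of `Z` and every
value `y` of `Y`,
`P(Y = y | do(Z = z)) = ∑_{t'} P(Y = y | T = t', Z = z) · P(T = t')`,
under the positivity assumption `P(T = t', Z = z) > 0` for all `t', z`.  Here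
`P(Y = y | do(Z = z)) := P(ω ↦ f_Y(z, U ω, E_Y ω) = y)`. -/
theorem frontdoor_effect_Z_on_Y
    {Ω 𝒰 𝒯 𝒵 𝒴 ℰT ℰZ ℰY : Type*}
    [MeasurableSpace Ω] [MeasurableSpace 𝒰] [MeasurableSpace 𝒯] [MeasurableSpace 𝒵]
    [MeasurableSpace 𝒴] [MeasurableSpace ℰT] [MeasurableSpace ℰZ] [MeasurableSpace ℰY]
    [Fintype 𝒰] [Nonempty 𝒰] [MeasurableSingletonClass 𝒰]
    [Fintype 𝒯] [Nonempty 𝒯] [MeasurableSingletonClass 𝒯]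
    [Fintype 𝒵] [Nonempty 𝒵] [MeasurableSingletonClass 𝒵]
    [Fintype 𝒴] [Nonempty 𝒴] [MeasurableSingletonClass 𝒴]
    (μ : Measure Ω) [IsProbabilityMeasure μ]
    (U : Ω → 𝒰) (ET : Ω → ℰT) (EZ : Ω → ℰZ) (EY : Ω → ℰY)
    (hU : Measurable U) (hET : Measurable ET) (hEZ : Measurable EZ) (hEY : Measurable EY)
    (fT : 𝒰 × ℰT → 𝒯) (fZ : 𝒯 × ℰZ → 𝒵) (fY : 𝒵 × 𝒰 × ℰY → 𝒴)
    (hfT : Measurable fT) (hfZ : Measurable fZ) (hfY : Measurable fY)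
    -- joint independence of U, E_T, E_Z, E_Y
    (hIndep : ∀ (A : Set 𝒰) (B : Set ℰT) (C : Set ℰZ) (D : Set ℰY),
      MeasurableSet A → MeasurableSet B → MeasurableSet C → MeasurableSet D →
      μ (U ⁻¹' A ∩ ET ⁻¹' B ∩ EZ ⁻¹' C ∩ EY ⁻¹' D)
        = μ (U ⁻¹' A) * μ (ET ⁻¹' B) * μ (EZ ⁻¹' C) * μ (EY ⁻¹' D))
    -- structural equations
    (T : Ω → 𝒯) (Z : Ω → 𝒵) (Y : Ω → 𝒴)
    (hT : ∀ ω, T ω = fT (U ω, ET ω))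
    (hZ : ∀ ω, Z ω = fZ (T ω, EZ ω))
    (hY : ∀ ω, Y ω = fY (Z ω, U ω, EY ω))
    -- positivity
    (hpos : ∀ (t' : 𝒯) (z : 𝒵), 0 < μ {ω | T ω = t' ∧ Z ω = z})
    (z : 𝒵) (y : 𝒴) :
    μ {ω | fY (z, U ω, EY ω) = y}
      = ∑ t' : 𝒯, condP μ {ω | Y ω = y} {ω | T ω = t' ∧ Z ω = z}
          * μ {ω | T ω = t'} :=
  frontdoor_effect_Z_on_Y_general μ U ET EZ EY hU hET fT fZ fY hfT hfZ hfY hIndep T Z Y hT hZ hY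
    hpos z y
end

section
/- In the front-door structural causal model, the interventional distribution of Y under do(T = t) decomposes through Z: for every value t of T and every value y of Y, P(Y = y | do(T = t)) = Σ_z P(Z = z | do(T = t)) · P(Y = y | do(Z = z)), where P(Y = y | do(T = t)) := P(ω ↦ f_Y(f_Z(t, E_Z(ω)), U(ω), E_Y(ω)) = y), P(Z = z | do(T = t)) := P(ω ↦ f_Z(t, E_Z(ω)) = z), and P(Y = y | do(Z = z)) := P(ω ↦ f_Y(z, U(ω), E_Y(ω)) = y). -/
open MeasureTheory

/-- **Two-step decomposition of the interventional distribution in the front-door SCM.**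
The interventional distribution of `Y` under `do(T = t)` decomposes through `Z`:
for every value `t` of `T` and every value `y` of `Y`,
`P(Y = y | do(T = t)) = ∑_z P(Z = z | do(T = t)) · P(Y = y | do(Z = z))`, where
`P(Y = y | do(T = t)) := P(ω ↦ f_Y(f_Z(t, E_Z ω), U ω, E_Y ω) = y)`,
`P(Z = z | do(T = t)) := P(ω ↦ f_Z(t, E_Z ω) = z)`, and
`P(Y = y | do(Z = z)) := P(ω ↦ f_Y(z, U ω, E_Y ω) = y)`. -/
theorem frontdoor_decomposition
    {Ω 𝒰 𝒯 𝒵 𝒴 ℰT ℰZ ℰY : Type*}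
    [MeasurableSpace Ω] [MeasurableSpace 𝒰] [MeasurableSpace 𝒯] [MeasurableSpace 𝒵]
    [MeasurableSpace 𝒴] [MeasurableSpace ℰT] [MeasurableSpace ℰZ] [MeasurableSpace ℰY]
    [Fintype 𝒰] [Nonempty 𝒰] [MeasurableSingletonClass 𝒰]
    [Fintype 𝒯] [Nonempty 𝒯] [MeasurableSingletonClass 𝒯]
    [Fintype 𝒵] [Nonempty 𝒵] [MeasurableSingletonClass 𝒵]
    [Fintype 𝒴] [Nonempty 𝒴] [MeasurableSingletonClass 𝒴]
    (μ : Measure Ω) [IsProbabilityMeasure μ]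
    (U : Ω → 𝒰) (ET : Ω → ℰT) (EZ : Ω → ℰZ) (EY : Ω → ℰY)
    (hU : Measurable U) (hET : Measurable ET) (hEZ : Measurable EZ) (hEY : Measurable EY)
    (fT : 𝒰 × ℰT → 𝒯) (fZ : 𝒯 × ℰZ → 𝒵) (fY : 𝒵 × 𝒰 × ℰY → 𝒴)
    (hfT : Measurable fT) (hfZ : Measurable fZ) (hfY : Measurable fY)
    -- joint independence of U, E_T, E_Z, E_Y
    (hIndep : ∀ (A : Set 𝒰) (B : Set ℰT) (C : Set ℰZ) (D : Set ℰY),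
      MeasurableSet A → MeasurableSet B → MeasurableSet C → MeasurableSet D →
      μ (U ⁻¹' A ∩ ET ⁻¹' B ∩ EZ ⁻¹' C ∩ EY ⁻¹' D)
        = μ (U ⁻¹' A) * μ (ET ⁻¹' B) * μ (EZ ⁻¹' C) * μ (EY ⁻¹' D))
    -- structural equations
    (T : Ω → 𝒯) (Z : Ω → 𝒵) (Y : Ω → 𝒴)
    (hT : ∀ ω, T ω = fT (U ω, ET ω))
    (hZ : ∀ ω, Z ω = fZ (T ω, EZ ω))
    (hY : ∀ ω, Y ω = fY (Z ω, U ω, EY ω))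
    (t : 𝒯) (y : 𝒴) :
    μ {ω | fY (fZ (t, EZ ω), U ω, EY ω) = y}
      = ∑ z : 𝒵, μ {ω | fZ (t, EZ ω) = z} * μ {ω | fY (z, U ω, EY ω) = y} := by

  classical
  set C : 𝒵 → Set ℰZ := fun z => {e | fZ (t, e) = z} with hCdef
  set D : 𝒵 → 𝒰 → Set ℰY := fun z u => {e | fY (z, u, e) = y} with hDdef
  have hCm : ∀ z, MeasurableSet (C z) := fun z =>
    (hfZ.comp (measurable_const.prodMk measurable_id)) (measurableSet_singleton z)
  have hDm : ∀ z u, MeasurableSet (D z u) := fun z u =>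
    (hfY.comp (measurable_const.prodMk (measurable_const.prodMk measurable_id)))
      (measurableSet_singleton y)
  -- key factorizations
  have key : ∀ z u, μ (U ⁻¹' {u} ∩ EZ ⁻¹' (C z) ∩ EY ⁻¹' (D z u))
      = μ (U ⁻¹' {u}) * μ (EZ ⁻¹' (C z)) * μ (EY ⁻¹' (D z u)) := by
    intro z u
    have h := hIndep {u} Set.univ (C z) (D z u) (measurableSet_singleton u)
      MeasurableSet.univ (hCm z) (hDm z u)
    simpa [Set.preimage_univ, Set.inter_univ, measure_univ, mul_one, one_mul] using h
  have key2 : ∀ z u, μ (U ⁻¹' {u} ∩ EY ⁻¹' (D z u))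
      = μ (U ⁻¹' {u}) * μ (EY ⁻¹' (D z u)) := by
    intro z u
    have h := hIndep {u} Set.univ Set.univ (D z u) (measurableSet_singleton u)
      MeasurableSet.univ MeasurableSet.univ (hDm z u)
    simpa [Set.preimage_univ, Set.inter_univ, measure_univ, mul_one, one_mul] using h
  -- the family of disjoint pieces for the LHS
  set A : 𝒵 × 𝒰 → Set Ω :=
    fun p => U ⁻¹' {p.2} ∩ EZ ⁻¹' (C p.1) ∩ EY ⁻¹' (D p.1 p.2) with hAdef
  have hAm : ∀ p, MeasurableSet (A p) := fun p =>
    ((hU (measurableSet_singleton p.2)).inter (hEZ (hCm p.1))).inter (hEY (hDm p.1 p.2))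
  have hAdisj : Pairwise (Function.onFun Disjoint A) := by
    intro p q hpq
    simp only [Function.onFun, Set.disjoint_left]
    rintro ω ⟨⟨hu1, hz1⟩, hy1⟩ ⟨⟨hu2, hz2⟩, hy2⟩
    apply hpq
    have hz : p.1 = q.1 := by
      have h1 : fZ (t, EZ ω) = p.1 := hz1
      have h2 : fZ (t, EZ ω) = q.1 := hz2
      rw [← h1, ← h2]
    have hu : p.2 = q.2 := by
      have h1 : U ω = p.2 := hu1
      have h2 : U ω = q.2 := hu2
      rw [← h1, ← h2]
    exact Prod.ext hz hu
  have hLcover : {ω | fY (fZ (t, EZ ω), U ω, EY ω) = y} = ⋃ p : 𝒵 × 𝒰, A p := by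
    ext ω
    simp only [Set.mem_setOf_eq, Set.mem_iUnion, hAdef, Set.mem_inter_iff,
      Set.mem_preimage, Set.mem_singleton_iff, hCdef, hDdef]
    constructor
    · intro h
      exact ⟨(fZ (t, EZ ω), U ω), ⟨rfl, rfl⟩, h⟩
    · rintro ⟨⟨z, u⟩, ⟨hu, hz⟩, hy'⟩
      simp only [Set.mem_setOf_eq] at hu hz hy'
      rw [hz, hu]; exact hy'
  have hLHS : μ {ω | fY (fZ (t, EZ ω), U ω, EY ω) = y}
      = ∑ p : 𝒵 × 𝒰, μ (A p) := by
    rw [hLcover, measure_iUnion hAdisj hAm, tsum_fintype]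
  -- the RHS inner measure decomposition
  have hRinner : ∀ z, μ {ω | fY (z, U ω, EY ω) = y}
      = ∑ u : 𝒰, μ (U ⁻¹' {u}) * μ (EY ⁻¹' (D z u)) := by
    intro z
    have hcover : {ω | fY (z, U ω, EY ω) = y}
        = ⋃ u : 𝒰, U ⁻¹' {u} ∩ EY ⁻¹' (D z u) := by
      ext ω
      simp only [Set.mem_setOf_eq, Set.mem_iUnion, Set.mem_inter_iff, Set.mem_preimage,
        Set.mem_singleton_iff, hDdef]
      constructor
      · intro h; exact ⟨U ω, rfl, h⟩
      · rintro ⟨u, hu, hy'⟩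
        rw [← hu] at hy'; exact hy'
    have hdisj : Pairwise (Function.onFun Disjoint
        (fun u => U ⁻¹' {u} ∩ EY ⁻¹' (D z u))) := by
      intro u v huv
      simp only [Function.onFun, Set.disjoint_left]
      rintro ω ⟨h1, _⟩ ⟨h2, _⟩
      exact huv (h1.symm.trans h2)
    rw [hcover, measure_iUnion hdisj (fun u =>
      (hU (measurableSet_singleton u)).inter (hEY (hDm z u))), tsum_fintype]
    exact Finset.sum_congr rfl fun u _ => key2 z u
  -- put it together
  rw [hLHS, Fintype.sum_prod_type]
  refine Finset.sum_congr rfl fun z _ => ?_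
  rw [hRinner z, Finset.mul_sum]
  refine Finset.sum_congr rfl fun u _ => ?_
  have hCz : {ω | fZ (t, EZ ω) = z} = EZ ⁻¹' (C z) := rfl
  rw [hAdef, key z u, hCz]
  ring
end

section
/- In the front-door structural causal model, Z is conditionally independent of U given T: for all values t of T with P(T = t) > 0, all values z of Z, and all values u of U, P(Z = z, U = u | T = t) = P(Z = z | T = t) · P(U = u | T = t). -/
open MeasureTheory

/-- **Conditional independence `Z ⫫ U | T` in the front-door SCM.**
For all values `t` of `T` with `P(T = t) > 0`, all values `z` of `Z` and all values
`u` of `U`, `P(Z = z, U = u | T = t) = P(Z = z | T = t) · P(U = u | T = t)`. -/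
theorem frontdoor_Z_indep_U_given_T
    {Ω 𝒰 𝒯 𝒵 𝒴 ℰT ℰZ ℰY : Type*}
    [MeasurableSpace Ω] [MeasurableSpace 𝒰] [MeasurableSpace 𝒯] [MeasurableSpace 𝒵]
    [MeasurableSpace 𝒴] [MeasurableSpace ℰT] [MeasurableSpace ℰZ] [MeasurableSpace ℰY]
    [Fintype 𝒰] [Nonempty 𝒰] [MeasurableSingletonClass 𝒰]
    [Fintype 𝒯] [Nonempty 𝒯] [MeasurableSingletonClass 𝒯]
    [Fintype 𝒵] [Nonempty 𝒵] [MeasurableSingletonClass 𝒵]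
    [Fintype 𝒴] [Nonempty 𝒴] [MeasurableSingletonClass 𝒴]
    (μ : Measure Ω) [IsProbabilityMeasure μ]
    (U : Ω → 𝒰) (ET : Ω → ℰT) (EZ : Ω → ℰZ) (EY : Ω → ℰY)
    (hU : Measurable U) (hET : Measurable ET) (hEZ : Measurable EZ) (hEY : Measurable EY)
    (fT : 𝒰 × ℰT → 𝒯) (fZ : 𝒯 × ℰZ → 𝒵) (fY : 𝒵 × 𝒰 × ℰY → 𝒴)
    (hfT : Measurable fT) (hfZ : Measurable fZ) (hfY : Measurable fY)
    -- joint independence of U, E_T, E_Z, E_Y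
    (hIndep : ∀ (A : Set 𝒰) (B : Set ℰT) (C : Set ℰZ) (D : Set ℰY),
      MeasurableSet A → MeasurableSet B → MeasurableSet C → MeasurableSet D →
      μ (U ⁻¹' A ∩ ET ⁻¹' B ∩ EZ ⁻¹' C ∩ EY ⁻¹' D)
        = μ (U ⁻¹' A) * μ (ET ⁻¹' B) * μ (EZ ⁻¹' C) * μ (EY ⁻¹' D))
    -- structural equations
    (T : Ω → 𝒯) (Z : Ω → 𝒵) (Y : Ω → 𝒴)
    (hT : ∀ ω, T ω = fT (U ω, ET ω))
    (hZ : ∀ ω, Z ω = fZ (T ω, EZ ω))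
    (hY : ∀ ω, Y ω = fY (Z ω, U ω, EY ω))
    (t : 𝒯) (ht : 0 < μ {ω | T ω = t}) (z : 𝒵) (u : 𝒰) :
    condP μ {ω | Z ω = z ∧ U ω = u} {ω | T ω = t}
      = condP μ {ω | Z ω = z} {ω | T ω = t}
          * condP μ {ω | U ω = u} {ω | T ω = t} := by
  classical
  set C : Set ℰZ := (fun e => fZ (t, e)) ⁻¹' {z} with hCdef
  have hCmeas : MeasurableSet C :=
    (hfZ.comp (measurable_const.prodMk measurable_id)) (measurableSet_singleton z)
  set B : 𝒰 → Set ℰT := fun v => (fun e => fT (v, e)) ⁻¹' {t} with hBdef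
  have hBmeas : ∀ v, MeasurableSet (B v) := fun v =>
    (hfT.comp (measurable_const.prodMk measurable_id)) (measurableSet_singleton t)
  set A : 𝒰 → Set Ω := fun v => U ⁻¹' {v} ∩ ET ⁻¹' (B v) with hAdef
  have hAmeas : ∀ v, MeasurableSet (A v) := fun v =>
    (hU (measurableSet_singleton v)).inter (hET (hBmeas v))
  -- independence facts
  have key : ∀ v, μ (A v ∩ EZ ⁻¹' C) = μ (A v) * μ (EZ ⁻¹' C) := by
    intro v
    have h1 := hIndep {v} (B v) C Set.univ (measurableSet_singleton v) (hBmeas v)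
      hCmeas MeasurableSet.univ
    have h2 := hIndep {v} (B v) Set.univ Set.univ (measurableSet_singleton v) (hBmeas v)
      MeasurableSet.univ MeasurableSet.univ
    simp only [Set.preimage_univ, Set.inter_univ, measure_univ, mul_one] at h1 h2
    rw [h1, h2]
  -- T-event decomposition
  have hTunion : {ω | T ω = t} = ⋃ v, A v := by
    ext ω
    simp only [Set.mem_setOf_eq, Set.mem_iUnion, hAdef, Set.mem_inter_iff,
      Set.mem_preimage, Set.mem_singleton_iff, hBdef]
    constructor
    · intro h; exact ⟨U ω, rfl, by rw [← hT ω]; exact h⟩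
    · rintro ⟨v, hv, hb⟩; rw [hT ω, hv]; exact hb
  have hdisj : Pairwise (Function.onFun Disjoint A) := by
    intro v w hvw
    refine Set.disjoint_left.2 ?_
    rintro ω ⟨hv, -⟩ ⟨hw, -⟩
    exact hvw (hv.symm.trans hw)
  have hsumT : μ {ω | T ω = t} = ∑' v, μ (A v) := by
    rw [hTunion, measure_iUnion hdisj hAmeas]
  have hsumTC : μ ({ω | T ω = t} ∩ EZ ⁻¹' C) = μ {ω | T ω = t} * μ (EZ ⁻¹' C) := by
    rw [hTunion, Set.iUnion_inter,
      measure_iUnion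
        (fun v w hvw => (hdisj hvw).mono Set.inter_subset_left Set.inter_subset_left)
        (fun v => (hAmeas v).inter (hEZ hCmeas))]
    simp_rw [key]
    rw [ENNReal.tsum_mul_right, ← hsumT, hTunion]
  -- event rewrites
  have E1 : {ω | Z ω = z ∧ U ω = u} ∩ {ω | T ω = t} = A u ∩ EZ ⁻¹' C := by
    ext ω
    simp only [Set.mem_inter_iff, Set.mem_setOf_eq, hAdef, Set.mem_preimage,
      Set.mem_singleton_iff, hBdef, hCdef]
    constructor
    · rintro ⟨⟨hz1, hu1⟩, ht1⟩
      refine ⟨⟨hu1, ?_⟩, ?_⟩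
      · rw [← hu1, ← hT ω]; exact ht1
      · rw [← ht1, ← hZ ω]; exact hz1
    · rintro ⟨⟨hu1, hb⟩, hc⟩
      have ht1 : T ω = t := by rw [hT ω, hu1]; exact hb
      exact ⟨⟨by rw [hZ ω, ht1]; exact hc, hu1⟩, ht1⟩
  have E2 : {ω | Z ω = z} ∩ {ω | T ω = t} = {ω | T ω = t} ∩ EZ ⁻¹' C := by
    ext ω
    simp only [Set.mem_inter_iff, Set.mem_setOf_eq, Set.mem_preimage,
      Set.mem_singleton_iff, hCdef]
    constructor
    · rintro ⟨hz1, ht1⟩; exact ⟨ht1, by rw [← ht1, ← hZ ω]; exact hz1⟩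
    · rintro ⟨ht1, hc⟩; exact ⟨by rw [hZ ω, ht1]; exact hc, ht1⟩
  have E3 : {ω | U ω = u} ∩ {ω | T ω = t} = A u := by
    ext ω
    simp only [Set.mem_inter_iff, Set.mem_setOf_eq, hAdef, Set.mem_preimage,
      Set.mem_singleton_iff, hBdef]
    constructor
    · rintro ⟨hu1, ht1⟩; exact ⟨hu1, by rw [← hu1, ← hT ω]; exact ht1⟩
    · rintro ⟨hu1, hb⟩; exact ⟨hu1, by rw [hT ω, hu1]; exact hb⟩
  have hT0 : μ {ω | T ω = t} ≠ 0 := ne_of_gt ht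
  have hTtop : μ {ω | T ω = t} ≠ ⊤ := measure_ne_top μ _
  unfold condP
  rw [E1, E2, E3, key u, hsumTC]
  have h2 : μ {ω | T ω = t} * μ (EZ ⁻¹' C) / μ {ω | T ω = t} = μ (EZ ⁻¹' C) := by
    rw [mul_comm, mul_div_assoc, ENNReal.div_self hT0 hTtop, mul_one]
  rw [h2, mul_comm (μ (A u)), mul_div_assoc]
end

section
/- In the front-door structural causal model, Y is conditionally independent of T given the pair (Z, U): for all values z of Z and u of U with P(Z = z, U = u) > 0, all values t of T, and all values y of Y, P(Y = y, T = t | Z = z, U = u) = P(Y = y | Z = z, U = u) · P(T = t | Z = z, U = u). -/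
/-! Given `Z = z, U = u`, the event `Y = y` is the event `E_Y ∈ S` for a fixed set `S`, while
`{T = t, Z = z, U = u}` is a rectangle event in `(U, E_T, E_Z)`, and `{Z = z, U = u}` is the
disjoint union of these over `t`. Independence of `E_Y` from `(U, E_T, E_Z)` therefore makes
`E_Y ∈ S` independent of both conditioning events, which is exactly the factorisation. -/

open MeasureTheory

section

variable {Ω : Type*} [MeasurableSpace Ω] {μ : Measure Ω}

theorem condP_inter_eq_mul_of_inter_eq {A B C E : Set Ω} (hB₀ : μ B ≠ 0) (hB : μ B ≠ ⊤)
    (hAB : A ∩ B = E ∩ B) (hEB : μ (E ∩ B) = μ E * μ B)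
    (hECB : μ (E ∩ (C ∩ B)) = μ E * μ (C ∩ B)) :
    condP μ (A ∩ C) B = condP μ A B * condP μ C B := by
  have hACB : A ∩ C ∩ B = E ∩ (C ∩ B) := by
    rw [Set.inter_right_comm, hAB, Set.inter_assoc, Set.inter_comm B]
  simp only [condP]
  rw [hACB, hAB, hECB, hEB, ENNReal.mul_div_cancel_right hB₀ hB, mul_div_assoc]

open Function in
theorem measure_inter_iUnion_eq_mul {ι : Type*} [Countable ι] {E : Set Ω} {A : ι → Set Ω}
    (hE : MeasurableSet E) (hA : ∀ i, MeasurableSet (A i)) (hd : Pairwise (Disjoint on A))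
    (h : ∀ i, μ (E ∩ A i) = μ E * μ (A i)) :
    μ (E ∩ ⋃ i, A i) = μ E * μ (⋃ i, A i) := by
  rw [Set.inter_iUnion, measure_iUnion (f := fun i => E ∩ A i)
    (hd.mono fun _ _ => Disjoint.mono inf_le_right inf_le_right) fun i => hE.inter (hA i),
    measure_iUnion hd hA, ← ENNReal.tsum_mul_left]
  exact tsum_congr h

end

theorem frontdoor_fiber_eq_rect {Ω 𝒰 𝒯 𝒵 ℰT ℰZ : Type*} {U : Ω → 𝒰} {ET : Ω → ℰT}
    {EZ : Ω → ℰZ} {T : Ω → 𝒯} {Z : Ω → 𝒵} {fT : 𝒰 × ℰT → 𝒯} {fZ : 𝒯 × ℰZ → 𝒵}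
    (hT : ∀ ω, T ω = fT (U ω, ET ω)) (hZ : ∀ ω, Z ω = fZ (T ω, EZ ω)) (t : 𝒯) (z : 𝒵) (u : 𝒰) :
    {ω | T ω = t} ∩ {ω | Z ω = z ∧ U ω = u}
      = U ⁻¹' {u} ∩ ET ⁻¹' {e | fT (u, e) = t} ∩ EZ ⁻¹' {e | fZ (t, e) = z} := by
  ext ω
  simp only [Set.mem_inter_iff, Set.mem_ofPred_eq, Set.mem_preimage, Set.mem_singleton_iff]
  constructor
  · rintro ⟨rfl, rfl, rfl⟩
    exact ⟨⟨rfl, (hT ω).symm⟩, (hZ ω).symm⟩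
  · rintro ⟨⟨rfl, ht⟩, hz⟩
    have hTω : T ω = t := (hT ω).trans ht
    exact ⟨hTω, (hZ ω).trans (hTω ▸ hz), rfl⟩

theorem measure_preimage_inter_rect_eq_mul {Ω 𝒰 ℰT ℰZ ℰY : Type*} [MeasurableSpace Ω]
    [MeasurableSpace 𝒰] [MeasurableSpace ℰT] [MeasurableSpace ℰZ] [MeasurableSpace ℰY]
    {μ : Measure Ω} [IsProbabilityMeasure μ]
    {U : Ω → 𝒰} {ET : Ω → ℰT} {EZ : Ω → ℰZ} {EY : Ω → ℰY}
    (hIndep : ∀ (A : Set 𝒰) (B : Set ℰT) (C : Set ℰZ) (D : Set ℰY),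
      MeasurableSet A → MeasurableSet B → MeasurableSet C → MeasurableSet D →
      μ (U ⁻¹' A ∩ ET ⁻¹' B ∩ EZ ⁻¹' C ∩ EY ⁻¹' D)
        = μ (U ⁻¹' A) * μ (ET ⁻¹' B) * μ (EZ ⁻¹' C) * μ (EY ⁻¹' D))
    {A : Set 𝒰} {B : Set ℰT} {C : Set ℰZ} {D : Set ℰY}
    (hA : MeasurableSet A) (hB : MeasurableSet B) (hC : MeasurableSet C) (hD : MeasurableSet D) :
    μ (EY ⁻¹' D ∩ (U ⁻¹' A ∩ ET ⁻¹' B ∩ EZ ⁻¹' C))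
      = μ (EY ⁻¹' D) * μ (U ⁻¹' A ∩ ET ⁻¹' B ∩ EZ ⁻¹' C) := by
  have hABC := hIndep A B C Set.univ hA hB hC MeasurableSet.univ
  simp only [Set.preimage_univ, Set.inter_univ, measure_univ, mul_one] at hABC
  rw [Set.inter_comm, hIndep A B C D hA hB hC hD, hABC, mul_comm]

theorem frontdoor_Y_indep_T_given_Z_U_general
    {Ω 𝒰 𝒯 𝒵 𝒴 ℰT ℰZ ℰY : Type*}
    [MeasurableSpace Ω] [MeasurableSpace 𝒰] [MeasurableSpace 𝒯] [MeasurableSpace 𝒵]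
    [MeasurableSpace 𝒴] [MeasurableSpace ℰT] [MeasurableSpace ℰZ] [MeasurableSpace ℰY]
    [MeasurableSingletonClass 𝒰]
    [Fintype 𝒯] [MeasurableSingletonClass 𝒯]
    [MeasurableSingletonClass 𝒵]
    [MeasurableSingletonClass 𝒴]
    (μ : Measure Ω) [IsProbabilityMeasure μ]
    (U : Ω → 𝒰) (ET : Ω → ℰT) (EZ : Ω → ℰZ) (EY : Ω → ℰY)
    (hU : Measurable U) (hET : Measurable ET) (hEZ : Measurable EZ) (hEY : Measurable EY)
    (fT : 𝒰 × ℰT → 𝒯) (fZ : 𝒯 × ℰZ → 𝒵) (fY : 𝒵 × 𝒰 × ℰY → 𝒴)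
    (hfT : Measurable fT) (hfZ : Measurable fZ) (hfY : Measurable fY)
    -- joint independence of U, E_T, E_Z, E_Y
    (hIndep : ∀ (A : Set 𝒰) (B : Set ℰT) (C : Set ℰZ) (D : Set ℰY),
      MeasurableSet A → MeasurableSet B → MeasurableSet C → MeasurableSet D →
      μ (U ⁻¹' A ∩ ET ⁻¹' B ∩ EZ ⁻¹' C ∩ EY ⁻¹' D)
        = μ (U ⁻¹' A) * μ (ET ⁻¹' B) * μ (EZ ⁻¹' C) * μ (EY ⁻¹' D))
    -- structural equations
    (T : Ω → 𝒯) (Z : Ω → 𝒵) (Y : Ω → 𝒴)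
    (hT : ∀ ω, T ω = fT (U ω, ET ω))
    (hZ : ∀ ω, Z ω = fZ (T ω, EZ ω))
    (hY : ∀ ω, Y ω = fY (Z ω, U ω, EY ω))
    (z : 𝒵) (u : 𝒰) (hzu : 0 < μ {ω | Z ω = z ∧ U ω = u}) (t : 𝒯) (y : 𝒴) :
    condP μ {ω | Y ω = y ∧ T ω = t} {ω | Z ω = z ∧ U ω = u}
      = condP μ {ω | Y ω = y} {ω | Z ω = z ∧ U ω = u}
          * condP μ {ω | T ω = t} {ω | Z ω = z ∧ U ω = u} := by
  have hTm : Measurable T := funext hT ▸ hfT.comp (hU.prodMk hET)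
  have hZm : Measurable Z := funext hZ ▸ hfZ.comp (hTm.prodMk hEZ)
  set B := {ω | Z ω = z ∧ U ω = u}
  have hBm : MeasurableSet B :=
    (hZm (measurableSet_singleton z)).inter (hU (measurableSet_singleton u))
  set S : Set ℰY := {e | fY (z, u, e) = y}
  have hSm : MeasurableSet S :=
    (hfY.comp (measurable_prodMk_left.comp measurable_prodMk_left)) (measurableSet_singleton y)
  have hYB : {ω | Y ω = y} ∩ B = EY ⁻¹' S ∩ B := by
    ext ω
    simp only [Set.mem_inter_iff, Set.mem_ofPred_eq, Set.mem_preimage, B, S]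
    exact and_congr_left fun ⟨hz, hu⟩ => by rw [hY, hz, hu]
  have hfiber : ∀ t', μ (EY ⁻¹' S ∩ ({ω | T ω = t'} ∩ B))
      = μ (EY ⁻¹' S) * μ ({ω | T ω = t'} ∩ B) := fun t' => by
    rw [frontdoor_fiber_eq_rect hT hZ]
    exact measure_preimage_inter_rect_eq_mul hIndep (measurableSet_singleton u)
      ((hfT.comp measurable_prodMk_left) (measurableSet_singleton t'))
      ((hfZ.comp measurable_prodMk_left) (measurableSet_singleton z)) hSm
  have hB : μ (EY ⁻¹' S ∩ B) = μ (EY ⁻¹' S) * μ B := by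
    have hunion := measure_inter_iUnion_eq_mul (hEY hSm)
      (fun t' => (hTm (measurableSet_singleton t')).inter hBm)
      ((pairwise_disjoint_fiber T).mono fun _ _ => Disjoint.mono inf_le_left inf_le_left)
      hfiber
    rwa [← Set.iUnion_inter, ← Set.preimage_iUnion, Set.iUnion_of_singleton, Set.preimage_univ,
      Set.univ_inter] at hunion
  exact condP_inter_eq_mul_of_inter_eq hzu.ne' (measure_ne_top μ B) hYB hB (hfiber t)

/-- **Conditional independence `Y ⫫ T | (Z, U)` in the front-door SCM.**
For all values `z` of `Z` and `u` of `U` with `P(Z = z, U = u) > 0`, all values `t`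
of `T` and all values `y` of `Y`,
`P(Y = y, T = t | Z = z, U = u) = P(Y = y | Z = z, U = u) · P(T = t | Z = z, U = u)`. -/
theorem frontdoor_Y_indep_T_given_Z_U
    {Ω 𝒰 𝒯 𝒵 𝒴 ℰT ℰZ ℰY : Type*}
    [MeasurableSpace Ω] [MeasurableSpace 𝒰] [MeasurableSpace 𝒯] [MeasurableSpace 𝒵]
    [MeasurableSpace 𝒴] [MeasurableSpace ℰT] [MeasurableSpace ℰZ] [MeasurableSpace ℰY]
    [Fintype 𝒰] [Nonempty 𝒰] [MeasurableSingletonClass 𝒰]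
    [Fintype 𝒯] [Nonempty 𝒯] [MeasurableSingletonClass 𝒯]
    [Fintype 𝒵] [Nonempty 𝒵] [MeasurableSingletonClass 𝒵]
    [Fintype 𝒴] [Nonempty 𝒴] [MeasurableSingletonClass 𝒴]
    (μ : Measure Ω) [IsProbabilityMeasure μ]
    (U : Ω → 𝒰) (ET : Ω → ℰT) (EZ : Ω → ℰZ) (EY : Ω → ℰY)
    (hU : Measurable U) (hET : Measurable ET) (hEZ : Measurable EZ) (hEY : Measurable EY)
    (fT : 𝒰 × ℰT → 𝒯) (fZ : 𝒯 × ℰZ → 𝒵) (fY : 𝒵 × 𝒰 × ℰY → 𝒴)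
    (hfT : Measurable fT) (hfZ : Measurable fZ) (hfY : Measurable fY)
    -- joint independence of U, E_T, E_Z, E_Y
    (hIndep : ∀ (A : Set 𝒰) (B : Set ℰT) (C : Set ℰZ) (D : Set ℰY),
      MeasurableSet A → MeasurableSet B → MeasurableSet C → MeasurableSet D →
      μ (U ⁻¹' A ∩ ET ⁻¹' B ∩ EZ ⁻¹' C ∩ EY ⁻¹' D)
        = μ (U ⁻¹' A) * μ (ET ⁻¹' B) * μ (EZ ⁻¹' C) * μ (EY ⁻¹' D))
    -- structural equations
    (T : Ω → 𝒯) (Z : Ω → 𝒵) (Y : Ω → 𝒴)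
    (hT : ∀ ω, T ω = fT (U ω, ET ω))
    (hZ : ∀ ω, Z ω = fZ (T ω, EZ ω))
    (hY : ∀ ω, Y ω = fY (Z ω, U ω, EY ω))
    (z : 𝒵) (u : 𝒰) (hzu : 0 < μ {ω | Z ω = z ∧ U ω = u}) (t : 𝒯) (y : 𝒴) :
    condP μ {ω | Y ω = y ∧ T ω = t} {ω | Z ω = z ∧ U ω = u}
      = condP μ {ω | Y ω = y} {ω | Z ω = z ∧ U ω = u}
          * condP μ {ω | T ω = t} {ω | Z ω = z ∧ U ω = u} :=
  frontdoor_Y_indep_T_given_Z_U_general μ U ET EZ EY hU hET hEZ hEY fT fZ fY hfT hfZ hfY hIndep T Z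
    Y hT hZ hY z u hzu t y
end

section
/- In the front-door structural causal model with binary treatment and outcome (𝒯 = 𝒴 = {0,1}, with Y real-valued taking values 0 and 1), assuming P(T = t', Z = z) > 0 for all t' ∈ {0,1} and all z ∈ 𝒵, the average treatment effect ATE := E[Y | do(T = 1)] − E[Y | do(T = 0)] satisfies ATE = Σ_z ( P(Z = z | T = 1) − P(Z = z | T = 0) ) · Σ_{t' ∈ {0,1}} P(Y = 1 | T = t', Z = z) · P(T = t'), where E[Y | do(T = t)] := Σ_{y ∈ {0,1}} y · P(Y = y | do(T = t)) and P(Y = y | do(T = t)) := P(ω ↦ f_Y(f_Z(t, E_Z(ω)), U(ω), E_Y(ω)) = y). -/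
open MeasureTheory

/-- **Front-door adjustment formula for the ATE with binary treatment and outcome.**
In the front-door SCM with `𝒯 = 𝒴 = Fin 2 = {0, 1}`, assuming
`P(T = t', Z = z) > 0` for all `t' ∈ {0,1}` and all `z`, the average treatment effect
`ATE := E[Y | do(T = 1)] − E[Y | do(T = 0)]` satisfies
`ATE = ∑_z (P(Z = z | T = 1) − P(Z = z | T = 0)) · ∑_{t'} P(Y = 1 | T = t', Z = z) · P(T = t')`,
where `E[Y | do(T = t)] := ∑_{y ∈ {0,1}} y · P(Y = y | do(T = t))` and
`P(Y = y | do(T = t)) := P(ω ↦ f_Y(f_Z(t, E_Z ω), U ω, E_Y ω) = y)`. -/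
theorem frontdoor_ATE
    {Ω 𝒰 𝒵 ℰT ℰZ ℰY : Type*}
    [MeasurableSpace Ω] [MeasurableSpace 𝒰] [MeasurableSpace 𝒵]
    [MeasurableSpace ℰT] [MeasurableSpace ℰZ] [MeasurableSpace ℰY]
    [Fintype 𝒰] [Nonempty 𝒰] [MeasurableSingletonClass 𝒰]
    [Fintype 𝒵] [Nonempty 𝒵] [MeasurableSingletonClass 𝒵]
    (μ : Measure Ω) [IsProbabilityMeasure μ]
    (U : Ω → 𝒰) (ET : Ω → ℰT) (EZ : Ω → ℰZ) (EY : Ω → ℰY)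
    (hU : Measurable U) (hET : Measurable ET) (hEZ : Measurable EZ) (hEY : Measurable EY)
    (fT : 𝒰 × ℰT → Fin 2) (fZ : Fin 2 × ℰZ → 𝒵) (fY : 𝒵 × 𝒰 × ℰY → Fin 2)
    (hfT : Measurable fT) (hfZ : Measurable fZ) (hfY : Measurable fY)
    -- joint independence of U, E_T, E_Z, E_Y
    (hIndep : ∀ (A : Set 𝒰) (B : Set ℰT) (C : Set ℰZ) (D : Set ℰY),
      MeasurableSet A → MeasurableSet B → MeasurableSet C → MeasurableSet D →
      μ (U ⁻¹' A ∩ ET ⁻¹' B ∩ EZ ⁻¹' C ∩ EY ⁻¹' D)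
        = μ (U ⁻¹' A) * μ (ET ⁻¹' B) * μ (EZ ⁻¹' C) * μ (EY ⁻¹' D))
    -- structural equations
    (T : Ω → Fin 2) (Z : Ω → 𝒵) (Y : Ω → Fin 2)
    (hT : ∀ ω, T ω = fT (U ω, ET ω))
    (hZ : ∀ ω, Z ω = fZ (T ω, EZ ω))
    (hY : ∀ ω, Y ω = fY (Z ω, U ω, EY ω))
    -- positivity
    (hpos : ∀ (t' : Fin 2) (z : 𝒵), 0 < μ {ω | T ω = t' ∧ Z ω = z})
    -- the average treatment effect E[Y | do(T = 1)] − E[Y | do(T = 0)]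
    (ATE : ℝ)
    (hATE : ATE =
      (∑ y : Fin 2, (y : ℝ) *
          (μ {ω | fY (fZ (1, EZ ω), U ω, EY ω) = y}).toReal)
        - ∑ y : Fin 2, (y : ℝ) *
            (μ {ω | fY (fZ (0, EZ ω), U ω, EY ω) = y}).toReal) :
    ATE = ∑ z : 𝒵,
        ((condP μ {ω | Z ω = z} {ω | T ω = 1}).toReal
            - (condP μ {ω | Z ω = z} {ω | T ω = 0}).toReal)
          * ∑ t' : Fin 2,
              (condP μ {ω | Y ω = 1} {ω | T ω = t' ∧ Z ω = z}).toReal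
                * (μ {ω | T ω = t'}).toReal := by

  classical
  obtain rfl : T = fun ω => fT (U ω, ET ω) := funext hT
  obtain rfl : Z = fun ω => fZ (fT (U ω, ET ω), EZ ω) := funext fun ω => by
    rw [hZ]
  obtain rfl : Y = fun ω => fY (fZ (fT (U ω, ET ω), EZ ω), U ω, EY ω) := funext fun ω => by
    rw [hY]
  beta_reduce
  -- master independence lemma
  have master : ∀ (B : 𝒰 → Set ℰT) (D : 𝒰 → Set ℰY) (C : Set ℰZ),
      (∀ u, MeasurableSet (B u)) → (∀ u, MeasurableSet (D u)) → MeasurableSet C →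
      μ ({ω | ET ω ∈ B (U ω) ∧ EY ω ∈ D (U ω)} ∩ EZ ⁻¹' C)
        = μ {ω | ET ω ∈ B (U ω) ∧ EY ω ∈ D (U ω)} * μ (EZ ⁻¹' C) := by
    intro B D C hB hD hC
    have key : ∀ (C' : Set ℰZ), MeasurableSet C' →
        μ ({ω | ET ω ∈ B (U ω) ∧ EY ω ∈ D (U ω)} ∩ EZ ⁻¹' C')
          = ∑ u : 𝒰, μ (U ⁻¹' {u}) * μ (ET ⁻¹' (B u)) * μ (EZ ⁻¹' C') * μ (EY ⁻¹' (D u)) := by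
      intro C' hC'
      have hset : {ω | ET ω ∈ B (U ω) ∧ EY ω ∈ D (U ω)} ∩ EZ ⁻¹' C'
          = ⋃ u ∈ (Finset.univ : Finset 𝒰),
              (U ⁻¹' {u} ∩ ET ⁻¹' (B u) ∩ EZ ⁻¹' C' ∩ EY ⁻¹' (D u)) := by
        ext ω
        simp only [Set.mem_inter_iff, Set.mem_setOf_eq, Set.mem_iUnion, Set.mem_preimage,
          Set.mem_singleton_iff, Finset.mem_univ, exists_true_left, exists_prop, true_and]
        constructor
        · rintro ⟨⟨h1, h2⟩, h3⟩
          exact ⟨U ω, ⟨⟨rfl, h1⟩, h3⟩, h2⟩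
        · rintro ⟨u, ⟨⟨⟨rfl, h1⟩, h3⟩, h2⟩⟩
          exact ⟨⟨h1, h2⟩, h3⟩
      rw [hset, measure_biUnion_finset]
      · exact Finset.sum_congr rfl fun u _ =>
          hIndep _ _ _ _ (measurableSet_singleton u) (hB u) hC' (hD u)
      · intro u _ v _ huv
        refine Set.disjoint_left.2 ?_
        rintro ω ⟨⟨⟨h, _⟩, _⟩, _⟩ ⟨⟨⟨h', _⟩, _⟩, _⟩
        exact huv (h.symm.trans h')
      · intro u _
        exact (((hU (measurableSet_singleton u)).inter (hET (hB u))).inter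
          (hEZ hC')).inter (hEY (hD u))
    have h1 := key C hC
    have h2 := key Set.univ MeasurableSet.univ
    simp only [Set.preimage_univ, Set.inter_univ, measure_univ, mul_one, one_mul] at h2
    rw [h1, h2, Finset.sum_mul]
    exact Finset.sum_congr rfl fun u _ => by ring
  -- abbreviations
  set sT : Fin 2 → Set Ω := fun t => {ω | fT (U ω, ET ω) = t} with hsT
  set sQ : Fin 2 → 𝒵 → Set Ω := fun t z => {ω | fZ (t, EZ ω) = z} with hsQ
  set sY : 𝒵 → Set Ω := fun z => {ω | fY (z, U ω, EY ω) = 1} with hsY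
  have mT : ∀ t, MeasurableSet (sT t) := fun t =>
    (hfT.comp (hU.prodMk hET)) (measurableSet_singleton t)
  have mQ : ∀ t z, MeasurableSet (sQ t z) := fun t z =>
    (hfZ.comp (measurable_const.prodMk hEZ)) (measurableSet_singleton z)
  have mY : ∀ z, MeasurableSet (sY z) := fun z =>
    (hfY.comp (measurable_const.prodMk (hU.prodMk hEY))) (measurableSet_singleton 1)
  have mBT : ∀ (u : 𝒰) (t : Fin 2), MeasurableSet {e : ℰT | fT (u, e) = t} := fun u t =>
    (hfT.comp measurable_prodMk_left) (measurableSet_singleton t)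
  have mBZ : ∀ (t : Fin 2) (z : 𝒵), MeasurableSet {e : ℰZ | fZ (t, e) = z} := fun t z =>
    (hfZ.comp measurable_prodMk_left) (measurableSet_singleton z)
  have mBY : ∀ (z : 𝒵) (u : 𝒰), MeasurableSet {e : ℰY | fY (z, u, e) = 1} := fun z u =>
    (hfY.comp (measurable_prodMk_left.comp measurable_prodMk_left))
      (measurableSet_singleton 1)
  -- F1 : P(T = t, Z = z) factorizes
  have F1 : ∀ (t : Fin 2) (z : 𝒵),
      μ (sT t ∩ {ω | fZ (fT (U ω, ET ω), EZ ω) = z}) = μ (sT t) * μ (sQ t z) := by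
    intro t z
    have e1 : sT t ∩ {ω | fZ (fT (U ω, ET ω), EZ ω) = z}
        = {ω | ET ω ∈ {e | fT (U ω, e) = t} ∧ EY ω ∈ (Set.univ : Set ℰY)}
            ∩ EZ ⁻¹' {e | fZ (t, e) = z} := by
      ext ω
      simp only [Set.mem_inter_iff, Set.mem_setOf_eq, Set.mem_preimage, Set.mem_univ, and_true,
        hsT]
      constructor
      · rintro ⟨h1, h2⟩; rw [h1] at h2; exact ⟨h1, h2⟩
      · rintro ⟨h1, h2⟩; refine ⟨h1, ?_⟩; rw [h1]; exact h2
    have e2 : {ω | ET ω ∈ {e | fT (U ω, e) = t} ∧ EY ω ∈ (Set.univ : Set ℰY)} = sT t := by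
      ext ω; simp [hsT]
    rw [e1, master _ _ _ (fun u => mBT u t) (fun u => MeasurableSet.univ) (mBZ t z), e2]
    rfl
  -- F2 : P(Y = 1, T = t, Z = z) factorizes
  have F2 : ∀ (t : Fin 2) (z : 𝒵),
      μ ({ω | fY (fZ (fT (U ω, ET ω), EZ ω), U ω, EY ω) = 1}
          ∩ {ω | fT (U ω, ET ω) = t ∧ fZ (fT (U ω, ET ω), EZ ω) = z})
        = μ (sT t ∩ sY z) * μ (sQ t z) := by
    intro t z
    have e1 : {ω | fY (fZ (fT (U ω, ET ω), EZ ω), U ω, EY ω) = 1}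
          ∩ {ω | fT (U ω, ET ω) = t ∧ fZ (fT (U ω, ET ω), EZ ω) = z}
        = {ω | ET ω ∈ {e | fT (U ω, e) = t} ∧ EY ω ∈ {e | fY (z, U ω, e) = 1}}
            ∩ EZ ⁻¹' {e | fZ (t, e) = z} := by
      ext ω
      simp only [Set.mem_inter_iff, Set.mem_setOf_eq, Set.mem_preimage]
      constructor
      · rintro ⟨h0, h1, h2⟩
        rw [h1] at h2; rw [h1, h2] at h0
        exact ⟨⟨h1, h0⟩, h2⟩
      · rintro ⟨⟨h1, h0⟩, h2⟩
        rw [h1]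
        exact ⟨by rw [h2]; exact h0, rfl, h2⟩
    have e2 : {ω | ET ω ∈ {e | fT (U ω, e) = t} ∧ EY ω ∈ {e | fY (z, U ω, e) = 1}}
        = sT t ∩ sY z := by
      ext ω; simp [hsT, hsY, Set.mem_inter_iff]
    rw [e1, master _ _ _ (fun u => mBT u t) (fun u => mBY z u) (mBZ t z), e2]
    rfl
  -- F3 : total probability over t
  have F3 : ∀ z : 𝒵, μ (sT 0 ∩ sY z) + μ (sT 1 ∩ sY z) = μ (sY z) := by
    intro z
    have e : sY z = (sT 0 ∩ sY z) ∪ (sT 1 ∩ sY z) := by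
      ext ω
      simp only [Set.mem_union, Set.mem_inter_iff, Set.mem_setOf_eq, hsT, hsY]
      have : fT (U ω, ET ω) = 0 ∨ fT (U ω, ET ω) = 1 := by omega
      tauto
    have hd : Disjoint (sT 0 ∩ sY z) (sT 1 ∩ sY z) := by
      refine Set.disjoint_left.2 ?_
      rintro ω ⟨h0, _⟩ ⟨h1, _⟩
      exact absurd (h0.symm.trans h1) (by decide)
    conv_rhs => rw [e]
    exact (measure_union hd ((mT 1).inter (mY z))).symm
  -- F4 : interventional distribution factorizes
  have F4 : ∀ t : Fin 2,
      μ {ω | fY (fZ (t, EZ ω), U ω, EY ω) = 1} = ∑ z : 𝒵, μ (sQ t z) * μ (sY z) := by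
    intro t
    have e : {ω | fY (fZ (t, EZ ω), U ω, EY ω) = 1}
        = ⋃ z ∈ (Finset.univ : Finset 𝒵), (sQ t z ∩ sY z) := by
      ext ω
      simp only [Set.mem_setOf_eq, Set.mem_iUnion, Set.mem_inter_iff, Finset.mem_univ,
        exists_true_left, exists_prop, true_and, hsQ, hsY]
      constructor
      · intro h
        exact ⟨fZ (t, EZ ω), rfl, h⟩
      · rintro ⟨z, h1, h2⟩
        rw [h1]; exact h2
    rw [e, measure_biUnion_finset]
    · refine Finset.sum_congr rfl fun z _ => ?_
      have e1 : sQ t z ∩ sY z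
          = {ω | ET ω ∈ (Set.univ : Set ℰT) ∧ EY ω ∈ {e | fY (z, U ω, e) = 1}}
              ∩ EZ ⁻¹' {e | fZ (t, e) = z} := by
        ext ω
        simp only [Set.mem_inter_iff, Set.mem_setOf_eq, Set.mem_preimage, Set.mem_univ, true_and,
          hsQ, hsY]
        tauto
      have e2 : {ω | ET ω ∈ (Set.univ : Set ℰT) ∧ EY ω ∈ {e | fY (z, U ω, e) = 1}} = sY z := by
        ext ω; simp [hsY]
      rw [e1, master _ _ _ (fun u => MeasurableSet.univ) (fun u => mBY z u) (mBZ t z), e2]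
      rw [mul_comm]
      rfl
    · intro z1 _ z2 _ hzz
      refine Set.disjoint_left.2 ?_
      rintro ω ⟨h0, _⟩ ⟨h1, _⟩
      exact hzz (h0.symm.trans h1)
    · intro z _
      exact (mQ t z).inter (mY z)
  -- positivity and finiteness
  have hTZ : ∀ (t : Fin 2) (z : 𝒵),
      {ω | fT (U ω, ET ω) = t ∧ fZ (fT (U ω, ET ω), EZ ω) = z}
        = sT t ∩ {ω | fZ (fT (U ω, ET ω), EZ ω) = z} := fun t z => Set.setOf_and
  have hpos' : ∀ (t : Fin 2) (z : 𝒵), 0 < μ (sT t) * μ (sQ t z) := by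
    intro t z
    have := hpos t z
    rwa [hTZ, F1] at this
  have hane : ∀ t : Fin 2, (μ (sT t)).toReal ≠ 0 := by
    intro t
    have h0 : μ (sT t) ≠ 0 := by
      intro h
      have := hpos' t (Classical.arbitrary 𝒵)
      rw [h, zero_mul] at this
      exact lt_irrefl _ this
    exact (ENNReal.toReal_pos h0 (measure_ne_top μ _)).ne'
  have hqne : ∀ (t : Fin 2) (z : 𝒵), (μ (sQ t z)).toReal ≠ 0 := by
    intro t z
    have h0 : μ (sQ t z) ≠ 0 := by
      intro h
      have := hpos' t z
      rw [h, mul_zero] at this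
      exact lt_irrefl _ this
    exact (ENNReal.toReal_pos h0 (measure_ne_top μ _)).ne'
  -- step 1 : condP for Z given T
  have S1 : ∀ (t : Fin 2) (z : 𝒵),
      (condP μ {ω | fZ (fT (U ω, ET ω), EZ ω) = z} (sT t)).toReal = (μ (sQ t z)).toReal := by
    intro t z
    rw [condP, Set.inter_comm, F1, ENNReal.toReal_div, ENNReal.toReal_mul, mul_comm,
      mul_div_assoc, div_self (hane t), mul_one]
  -- step 2 : condP for Y given T, Z times P(T)
  have S2 : ∀ (t : Fin 2) (z : 𝒵),
      (condP μ {ω | fY (fZ (fT (U ω, ET ω), EZ ω), U ω, EY ω) = 1}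
          {ω | fT (U ω, ET ω) = t ∧ fZ (fT (U ω, ET ω), EZ ω) = z}).toReal
        * (μ (sT t)).toReal = (μ (sT t ∩ sY z)).toReal := by
    intro t z
    rw [condP, F2, hTZ, F1, ENNReal.toReal_div, ENNReal.toReal_mul, ENNReal.toReal_mul]
    have ha := hane t
    have hq := hqne t z
    field_simp
  -- final computation
  rw [hATE]
  have hsum : ∀ t : Fin 2,
      (∑ y : Fin 2, (y : ℝ) * (μ {ω | fY (fZ (t, EZ ω), U ω, EY ω) = y}).toReal)
        = ∑ z : 𝒵, (μ (sQ t z)).toReal * (μ (sY z)).toReal := by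
    intro t
    rw [Fin.sum_univ_two]
    simp only [Fin.val_zero, Nat.cast_zero, zero_mul, Fin.val_one, Nat.cast_one, one_mul,
      zero_add]
    rw [F4 t, ENNReal.toReal_sum (fun z _ => ENNReal.mul_ne_top (measure_ne_top μ _)
      (measure_ne_top μ _))]
    exact Finset.sum_congr rfl fun z _ => ENNReal.toReal_mul
  rw [hsum 1, hsum 0, ← Finset.sum_sub_distrib]
  refine Finset.sum_congr rfl fun z _ => ?_
  rw [S1 1 z, S1 0 z, Fin.sum_univ_two, S2 0 z, S2 1 z]
  have h3 : (μ (sT 0 ∩ sY z)).toReal + (μ (sT 1 ∩ sY z)).toReal = (μ (sY z)).toReal := by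
    rw [← ENNReal.toReal_add (measure_ne_top μ _) (measure_ne_top μ _), F3]
  rw [h3]
  ring
end

section
/- In the extended structural causal model with observed covariates (the model of Figure 2 of the paper), assuming P(T = t', Z = z) > 0 for all values t', z, the front-door adjustment formula with adjustment variable Z remains valid: for every value t of T with P(T = t) > 0 and every value y of Y, P(Y = y | do(T = t)) = Σ_z P(Z = z | T = t) · Σ_{t'} P(Y = y | T = t', Z = z) · P(T = t'), where P(Y = y | do(T = t)) := P(ω ↦ f_Y(f_Z(t, E_Z(ω)), W_TY(ω), W_Y(ω), U(ω), E_Y(ω)) = y). -/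
open MeasureTheory

lemma fd_partition {Ω ι : Type*} [MeasurableSpace Ω] [MeasurableSpace ι]
    [Fintype ι] [MeasurableSingletonClass ι]
    (μ : Measure Ω) (V : Ω → ι) (hV : Measurable V)
    (A : Set Ω) (hA : MeasurableSet A) :
    μ A = ∑ v, μ (A ∩ V ⁻¹' {v}) := by
  have hcover : A = ⋃ v, A ∩ V ⁻¹' {v} := by
    ext ω; simp
  have hdisj : Pairwise (Function.onFun Disjoint fun v => A ∩ V ⁻¹' {v}) := by
    intro i j hij
    simp only [Function.onFun]
    apply Set.disjoint_left.mpr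
    rintro ω ⟨-, hi⟩ ⟨-, hj⟩
    simp only [Set.mem_preimage, Set.mem_singleton_iff] at hi hj
    exact hij (by rw [← hi, ← hj])
  have hmeas : ∀ v, MeasurableSet (A ∩ V ⁻¹' {v}) :=
    fun v => hA.inter (hV (measurableSet_singleton v))
  have := measure_iUnion (μ := μ) hdisj hmeas
  rw [← hcover, tsum_fintype] at this
  exact this

lemma fd_algebra {V 𝒯 𝒵 : Type*} [Fintype V] [Fintype 𝒯] [Fintype 𝒵] [Nonempty 𝒵]
    (π : V → ENNReal) (e : 𝒯 → V → ENNReal) (f : 𝒵 → 𝒯 → ENNReal) (g : 𝒵 → V → ENNReal)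
    (hfinf : ∀ z t', f z t' ≠ ⊤) (hfinp : ∀ t', (∑ v, π v * e t' v) ≠ ⊤)
    (he1 : ∀ v, ∑ t', e t' v = 1)
    (hpos : ∀ (t' : 𝒯) (z : 𝒵), 0 < (∑ v, π v * e t' v) * f z t')
    (t : 𝒯) :
    ∑ z, f z t * ∑ v, π v * g z v
      = ∑ z, ((∑ v, π v * e t v) * f z t) / (∑ v, π v * e t v)
          * ∑ t', ((∑ v, π v * e t' v * g z v) * f z t')
              / ((∑ v, π v * e t' v) * f z t') * (∑ v, π v * e t' v) := by
  have hp0 : ∀ t', (∑ v, π v * e t' v) ≠ 0 := by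
    intro t'
    obtain ⟨z⟩ := ‹Nonempty 𝒵›
    exact fun h => (hpos t' z).ne' (by rw [h, zero_mul])
  have hf0 : ∀ (z : 𝒵) (t' : 𝒯), f z t' ≠ 0 := by
    intro z t'
    exact fun h => (hpos t' z).ne' (by rw [h, mul_zero])
  refine Finset.sum_congr rfl fun z _ => ?_
  have h1 : (∑ v, π v * e t v) * f z t / (∑ v, π v * e t v) = f z t := by
    rw [mul_comm, mul_div_assoc, ENNReal.div_self (hp0 t) (hfinp t), mul_one]
  have h2 : ∀ t', ((∑ v, π v * e t' v * g z v) * f z t')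
      / ((∑ v, π v * e t' v) * f z t') * (∑ v, π v * e t' v)
      = ∑ v, π v * e t' v * g z v := by
    intro t'
    rw [ENNReal.mul_div_mul_right _ _ (hf0 z t') (hfinf z t'),
      ENNReal.div_mul_cancel (hp0 t') (hfinp t')]
  rw [h1]
  simp only [h2]
  congr 1
  rw [Finset.sum_comm]
  refine Finset.sum_congr rfl fun v _ => ?_
  calc π v * g z v = π v * g z v * ∑ t', e t' v := by rw [he1 v, mul_one]
    _ = ∑ t', π v * e t' v * g z v := by
        rw [Finset.mul_sum]
        exact Finset.sum_congr rfl fun t' _ => by ring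


/-- **Front-door adjustment in the extended SCM with observed covariates (Figure 2).**
In the structural causal model with `T = f_T(W_T, W_TY, U, E_T)`, `Z = f_Z(T, E_Z)`,
`Y = f_Y(Z, W_TY, W_Y, U, E_Y)`, where `U, W_T, W_TY, W_Y, E_T, E_Z, E_Y` are jointly
independent (realizing the graph `W_T → T`, `W_TY → T`, `W_TY → Y`, `W_Y → Y`,
`U → T`, `U → Y`, `T → Z → Y`, in which `Z` satisfies the front-door criterion relative
to `(T, Y)`), the front-door adjustment formula with adjustment variable `Z` remains
valid: for every value `t` of `T` with `P(T = t) > 0` and every value `y` of `Y`,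
`P(Y = y | do(T = t)) = ∑_z P(Z = z | T = t) · ∑_{t'} P(Y = y | T = t', Z = z) · P(T = t')`,
under the positivity assumption `P(T = t', Z = z) > 0` for all `t', z`, where
`P(Y = y | do(T = t)) := P(ω ↦ f_Y(f_Z(t, E_Z ω), W_TY ω, W_Y ω, U ω, E_Y ω) = y)`. -/
theorem frontdoor_adjustment_extended
    {Ω 𝒰 𝒲T 𝒲TY 𝒲Y 𝒯 𝒵 𝒴 ℰT ℰZ ℰY : Type*}
    [MeasurableSpace Ω] [MeasurableSpace 𝒰]
    [MeasurableSpace 𝒲T] [MeasurableSpace 𝒲TY] [MeasurableSpace 𝒲Y]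
    [MeasurableSpace 𝒯] [MeasurableSpace 𝒵] [MeasurableSpace 𝒴]
    [MeasurableSpace ℰT] [MeasurableSpace ℰZ] [MeasurableSpace ℰY]
    [Fintype 𝒰] [Nonempty 𝒰] [MeasurableSingletonClass 𝒰]
    [Fintype 𝒲T] [Nonempty 𝒲T] [MeasurableSingletonClass 𝒲T]
    [Fintype 𝒲TY] [Nonempty 𝒲TY] [MeasurableSingletonClass 𝒲TY]
    [Fintype 𝒲Y] [Nonempty 𝒲Y] [MeasurableSingletonClass 𝒲Y]
    [Fintype 𝒯] [Nonempty 𝒯] [MeasurableSingletonClass 𝒯]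
    [Fintype 𝒵] [Nonempty 𝒵] [MeasurableSingletonClass 𝒵]
    [Fintype 𝒴] [Nonempty 𝒴] [MeasurableSingletonClass 𝒴]
    (μ : Measure Ω) [IsProbabilityMeasure μ]
    (U : Ω → 𝒰) (WT : Ω → 𝒲T) (WTY : Ω → 𝒲TY) (WY : Ω → 𝒲Y)
    (ET : Ω → ℰT) (EZ : Ω → ℰZ) (EY : Ω → ℰY)
    (hU : Measurable U) (hWT : Measurable WT) (hWTY : Measurable WTY)
    (hWY : Measurable WY)
    (hET : Measurable ET) (hEZ : Measurable EZ) (hEY : Measurable EY)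
    (fT : 𝒲T × 𝒲TY × 𝒰 × ℰT → 𝒯) (fZ : 𝒯 × ℰZ → 𝒵)
    (fY : 𝒵 × 𝒲TY × 𝒲Y × 𝒰 × ℰY → 𝒴)
    (hfT : Measurable fT) (hfZ : Measurable fZ) (hfY : Measurable fY)
    -- joint independence of U, W_T, W_TY, W_Y, E_T, E_Z, E_Y
    (hIndep : ∀ (A : Set 𝒰) (B : Set 𝒲T) (C : Set 𝒲TY) (D : Set 𝒲Y)
        (E : Set ℰT) (F : Set ℰZ) (G : Set ℰY),
      MeasurableSet A → MeasurableSet B → MeasurableSet C → MeasurableSet D →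
      MeasurableSet E → MeasurableSet F → MeasurableSet G →
      μ (U ⁻¹' A ∩ WT ⁻¹' B ∩ WTY ⁻¹' C ∩ WY ⁻¹' D ∩ ET ⁻¹' E ∩ EZ ⁻¹' F ∩ EY ⁻¹' G)
        = μ (U ⁻¹' A) * μ (WT ⁻¹' B) * μ (WTY ⁻¹' C) * μ (WY ⁻¹' D)
            * μ (ET ⁻¹' E) * μ (EZ ⁻¹' F) * μ (EY ⁻¹' G))
    -- structural equations
    (T : Ω → 𝒯) (Z : Ω → 𝒵) (Y : Ω → 𝒴)
    (hT : ∀ ω, T ω = fT (WT ω, WTY ω, U ω, ET ω))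
    (hZ : ∀ ω, Z ω = fZ (T ω, EZ ω))
    (hY : ∀ ω, Y ω = fY (Z ω, WTY ω, WY ω, U ω, EY ω))
    -- positivity
    (hpos : ∀ (t' : 𝒯) (z : 𝒵), 0 < μ {ω | T ω = t' ∧ Z ω = z})
    (t : 𝒯) (ht : 0 < μ {ω | T ω = t}) (y : 𝒴) :
    μ {ω | fY (fZ (t, EZ ω), WTY ω, WY ω, U ω, EY ω) = y}
      = ∑ z : 𝒵, condP μ {ω | Z ω = z} {ω | T ω = t}
          * ∑ t' : 𝒯, condP μ {ω | Y ω = y} {ω | T ω = t' ∧ Z ω = z}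
              * μ {ω | T ω = t'} := by
  classical
  -- measurability of structural variables
  have hTm : Measurable T := by
    have h : T = fun ω => fT (WT ω, WTY ω, U ω, ET ω) := funext hT
    rw [h]; exact hfT.comp (hWT.prodMk (hWTY.prodMk (hU.prodMk hET)))
  have hZm : Measurable Z := by
    have h : Z = fun ω => fZ (T ω, EZ ω) := funext hZ
    rw [h]; exact hfZ.comp (hTm.prodMk hEZ)
  have hYm : Measurable Y := by
    have h : Y = fun ω => fY (Z ω, WTY ω, WY ω, U ω, EY ω) := funext hY
    rw [h]; exact hfY.comp (hZm.prodMk (hWTY.prodMk (hWY.prodMk (hU.prodMk hEY))))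
  -- the coarse "confounder" variable
  set V : Ω → 𝒰 × 𝒲T × 𝒲TY × 𝒲Y := fun ω => (U ω, WT ω, WTY ω, WY ω) with hVdef
  have hVm : Measurable V := hU.prodMk (hWT.prodMk (hWTY.prodMk hWY))
  -- measurability of the slice sets
  have hEm : ∀ (v : 𝒰 × 𝒲T × 𝒲TY × 𝒲Y) (t' : 𝒯),
      MeasurableSet {eT | fT (v.2.1, v.2.2.1, v.1, eT) = t'} :=
    fun v t' => (hfT.comp (measurable_const.prodMk (measurable_const.prodMk
      (measurable_const.prodMk measurable_id)))) (measurableSet_singleton t')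
  have hFm : ∀ (z : 𝒵) (t' : 𝒯), MeasurableSet {eZ | fZ (t', eZ) = z} :=
    fun z t' => (hfZ.comp (measurable_const.prodMk measurable_id))
      (measurableSet_singleton z)
  have hGm : ∀ (z : 𝒵) (v : 𝒰 × 𝒲T × 𝒲TY × 𝒲Y),
      MeasurableSet {eY | fY (z, v.2.2.1, v.2.2.2, v.1, eY) = y} :=
    fun z v => (hfY.comp (measurable_const.prodMk (measurable_const.prodMk
      (measurable_const.prodMk (measurable_const.prodMk measurable_id)))))
      (measurableSet_singleton y)
  -- factorization on "rectangles"
  have key : ∀ (u : 𝒰) (a : 𝒲T) (b : 𝒲TY) (c : 𝒲Y)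
      (E : Set ℰT) (F : Set ℰZ) (G : Set ℰY),
      MeasurableSet E → MeasurableSet F → MeasurableSet G →
      μ {ω | (U ω = u ∧ WT ω = a ∧ WTY ω = b ∧ WY ω = c)
          ∧ ET ω ∈ E ∧ EZ ω ∈ F ∧ EY ω ∈ G}
        = μ (U ⁻¹' {u}) * μ (WT ⁻¹' {a}) * μ (WTY ⁻¹' {b}) * μ (WY ⁻¹' {c})
            * μ (ET ⁻¹' E) * μ (EZ ⁻¹' F) * μ (EY ⁻¹' G) := by
    intro u a b c E F G hE hF hG
    rw [← hIndep {u} {a} {b} {c} E F G (measurableSet_singleton u)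
      (measurableSet_singleton a) (measurableSet_singleton b)
      (measurableSet_singleton c) hE hF hG]
    congr 1
    ext ω
    simp only [Set.mem_setOf_eq, Set.mem_inter_iff, Set.mem_preimage,
      Set.mem_singleton_iff]
    tauto
  -- P(T = t')
  have hPT : ∀ t' : 𝒯, μ {ω | T ω = t'}
      = ∑ v : 𝒰 × 𝒲T × 𝒲TY × 𝒲Y,
          (μ (U ⁻¹' {v.1}) * μ (WT ⁻¹' {v.2.1}) * μ (WTY ⁻¹' {v.2.2.1})
            * μ (WY ⁻¹' {v.2.2.2}))
          * μ (ET ⁻¹' {eT | fT (v.2.1, v.2.2.1, v.1, eT) = t'}) := by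
    intro t'
    rw [fd_partition μ V hVm {ω | T ω = t'} (hTm (measurableSet_singleton t'))]
    refine Finset.sum_congr rfl fun v _ => ?_
    have hset : {ω | T ω = t'} ∩ V ⁻¹' {v}
        = {ω | (U ω = v.1 ∧ WT ω = v.2.1 ∧ WTY ω = v.2.2.1 ∧ WY ω = v.2.2.2)
            ∧ ET ω ∈ {eT | fT (v.2.1, v.2.2.1, v.1, eT) = t'}
            ∧ EZ ω ∈ (Set.univ : Set ℰZ) ∧ EY ω ∈ (Set.univ : Set ℰY)} := by
      ext ω
      simp only [Set.mem_inter_iff, Set.mem_setOf_eq, Set.mem_preimage,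
        Set.mem_singleton_iff, Set.mem_univ, and_true, hVdef, Prod.ext_iff, hT]
      constructor
      · rintro ⟨h1, h2, h3, h4, h5⟩
        rw [h2, h3, h4] at h1
        exact ⟨⟨h2, h3, h4, h5⟩, h1⟩
      · rintro ⟨⟨h2, h3, h4, h5⟩, h1⟩
        rw [← h2, ← h3, ← h4] at h1
        exact ⟨h1, h2, h3, h4, h5⟩
    rw [hset, key v.1 v.2.1 v.2.2.1 v.2.2.2 _ _ _ (hEm v t')
      MeasurableSet.univ MeasurableSet.univ]
    simp [mul_assoc]
  -- P(Z = z ∧ T = t')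
  have hPZT : ∀ (z : 𝒵) (t' : 𝒯), μ ({ω | Z ω = z} ∩ {ω | T ω = t'})
      = (∑ v : 𝒰 × 𝒲T × 𝒲TY × 𝒲Y,
          (μ (U ⁻¹' {v.1}) * μ (WT ⁻¹' {v.2.1}) * μ (WTY ⁻¹' {v.2.2.1})
            * μ (WY ⁻¹' {v.2.2.2}))
          * μ (ET ⁻¹' {eT | fT (v.2.1, v.2.2.1, v.1, eT) = t'}))
        * μ (EZ ⁻¹' {eZ | fZ (t', eZ) = z}) := by
    intro z t'
    rw [fd_partition μ V hVm ({ω | Z ω = z} ∩ {ω | T ω = t'})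
      ((hZm (measurableSet_singleton z)).inter (hTm (measurableSet_singleton t'))),
      Finset.sum_mul]
    refine Finset.sum_congr rfl fun v _ => ?_
    have hset : ({ω | Z ω = z} ∩ {ω | T ω = t'}) ∩ V ⁻¹' {v}
        = {ω | (U ω = v.1 ∧ WT ω = v.2.1 ∧ WTY ω = v.2.2.1 ∧ WY ω = v.2.2.2)
            ∧ ET ω ∈ {eT | fT (v.2.1, v.2.2.1, v.1, eT) = t'}
            ∧ EZ ω ∈ {eZ | fZ (t', eZ) = z} ∧ EY ω ∈ (Set.univ : Set ℰY)} := by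
      ext ω
      simp only [Set.mem_inter_iff, Set.mem_setOf_eq, Set.mem_preimage,
        Set.mem_singleton_iff, Set.mem_univ, and_true, hVdef, Prod.ext_iff, hT, hZ]
      constructor
      · rintro ⟨⟨hz, h1⟩, h2, h3, h4, h5⟩
        rw [h1] at hz
        rw [h2, h3, h4] at h1
        exact ⟨⟨h2, h3, h4, h5⟩, h1, hz⟩
      · rintro ⟨⟨h2, h3, h4, h5⟩, h1, hz⟩
        rw [← h2, ← h3, ← h4] at h1
        rw [← h1] at hz
        exact ⟨⟨hz, h1⟩, h2, h3, h4, h5⟩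
    rw [hset, key v.1 v.2.1 v.2.2.1 v.2.2.2 _ _ _ (hEm v t') (hFm z t')
      MeasurableSet.univ]
    simp [mul_assoc]
  -- P(T = t' ∧ Z = z)
  have hPTZ : ∀ (t' : 𝒯) (z : 𝒵), μ {ω | T ω = t' ∧ Z ω = z}
      = (∑ v : 𝒰 × 𝒲T × 𝒲TY × 𝒲Y,
          (μ (U ⁻¹' {v.1}) * μ (WT ⁻¹' {v.2.1}) * μ (WTY ⁻¹' {v.2.2.1})
            * μ (WY ⁻¹' {v.2.2.2}))
          * μ (ET ⁻¹' {eT | fT (v.2.1, v.2.2.1, v.1, eT) = t'}))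
        * μ (EZ ⁻¹' {eZ | fZ (t', eZ) = z}) := by
    intro t' z
    rw [← hPZT z t']
    congr 1
    ext ω
    simp only [Set.mem_setOf_eq, Set.mem_inter_iff]
    tauto
  -- P(Y = y ∧ (T = t' ∧ Z = z))
  have hPY : ∀ (t' : 𝒯) (z : 𝒵),
      μ ({ω | Y ω = y} ∩ {ω | T ω = t' ∧ Z ω = z})
      = (∑ v : 𝒰 × 𝒲T × 𝒲TY × 𝒲Y,
          (μ (U ⁻¹' {v.1}) * μ (WT ⁻¹' {v.2.1}) * μ (WTY ⁻¹' {v.2.2.1})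
            * μ (WY ⁻¹' {v.2.2.2}))
          * μ (ET ⁻¹' {eT | fT (v.2.1, v.2.2.1, v.1, eT) = t'})
          * μ (EY ⁻¹' {eY | fY (z, v.2.2.1, v.2.2.2, v.1, eY) = y}))
        * μ (EZ ⁻¹' {eZ | fZ (t', eZ) = z}) := by
    intro t' z
    rw [fd_partition μ V hVm ({ω | Y ω = y} ∩ {ω | T ω = t' ∧ Z ω = z})
      ((hYm (measurableSet_singleton y)).inter
        ((hTm (measurableSet_singleton t')).inter (hZm (measurableSet_singleton z)))),
      Finset.sum_mul]
    refine Finset.sum_congr rfl fun v _ => ?_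
    have hset : ({ω | Y ω = y} ∩ {ω | T ω = t' ∧ Z ω = z}) ∩ V ⁻¹' {v}
        = {ω | (U ω = v.1 ∧ WT ω = v.2.1 ∧ WTY ω = v.2.2.1 ∧ WY ω = v.2.2.2)
            ∧ ET ω ∈ {eT | fT (v.2.1, v.2.2.1, v.1, eT) = t'}
            ∧ EZ ω ∈ {eZ | fZ (t', eZ) = z}
            ∧ EY ω ∈ {eY | fY (z, v.2.2.1, v.2.2.2, v.1, eY) = y}} := by
      ext ω
      simp only [Set.mem_inter_iff, Set.mem_setOf_eq, Set.mem_preimage,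
        Set.mem_singleton_iff, hVdef, Prod.ext_iff, hT, hZ, hY]
      constructor
      · rintro ⟨⟨hy, h1, hz⟩, h2, h3, h4, h5⟩
        rw [h1] at hy hz
        rw [hz] at hy
        rw [h2, h4, h5] at hy
        rw [h2, h3, h4] at h1
        exact ⟨⟨h2, h3, h4, h5⟩, h1, hz, hy⟩
      · rintro ⟨⟨h2, h3, h4, h5⟩, h1, hz, hy⟩
        rw [← h2, ← h3, ← h4] at h1
        rw [← h1] at hz
        rw [← h2, ← h4, ← h5] at hy
        rw [← hz] at hy
        exact ⟨⟨hy, h1, hz⟩, h2, h3, h4, h5⟩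
    rw [hset, key v.1 v.2.1 v.2.2.1 v.2.2.2 _ _ _ (hEm v t') (hFm z t') (hGm z v)]
    ring
  -- the interventional distribution
  have hL : μ {ω | fY (fZ (t, EZ ω), WTY ω, WY ω, U ω, EY ω) = y}
      = ∑ z : 𝒵, μ (EZ ⁻¹' {eZ | fZ (t, eZ) = z})
          * ∑ v : 𝒰 × 𝒲T × 𝒲TY × 𝒲Y,
            (μ (U ⁻¹' {v.1}) * μ (WT ⁻¹' {v.2.1}) * μ (WTY ⁻¹' {v.2.2.1})
              * μ (WY ⁻¹' {v.2.2.2}))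
            * μ (EY ⁻¹' {eY | fY (z, v.2.2.1, v.2.2.2, v.1, eY) = y}) := by
    have hWm : Measurable (fun ω => (fZ (t, EZ ω), V ω)) :=
      (hfZ.comp (measurable_const.prodMk hEZ)).prodMk hVm
    have hAm : MeasurableSet {ω | fY (fZ (t, EZ ω), WTY ω, WY ω, U ω, EY ω) = y} :=
      (hfY.comp ((hfZ.comp (measurable_const.prodMk hEZ)).prodMk
        (hWTY.prodMk (hWY.prodMk (hU.prodMk hEY))))) (measurableSet_singleton y)
    rw [fd_partition μ (fun ω => (fZ (t, EZ ω), V ω)) hWm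
      {ω | fY (fZ (t, EZ ω), WTY ω, WY ω, U ω, EY ω) = y} hAm,
      Fintype.sum_prod_type]
    refine Finset.sum_congr rfl fun z _ => ?_
    rw [Finset.mul_sum]
    refine Finset.sum_congr rfl fun v _ => ?_
    have hset : {ω | fY (fZ (t, EZ ω), WTY ω, WY ω, U ω, EY ω) = y}
          ∩ (fun ω => (fZ (t, EZ ω), V ω)) ⁻¹' {(z, v)}
        = {ω | (U ω = v.1 ∧ WT ω = v.2.1 ∧ WTY ω = v.2.2.1 ∧ WY ω = v.2.2.2)
            ∧ ET ω ∈ (Set.univ : Set ℰT)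
            ∧ EZ ω ∈ {eZ | fZ (t, eZ) = z}
            ∧ EY ω ∈ {eY | fY (z, v.2.2.1, v.2.2.2, v.1, eY) = y}} := by
      ext ω
      simp only [Set.mem_inter_iff, Set.mem_setOf_eq, Set.mem_preimage,
        Set.mem_singleton_iff, Set.mem_univ, true_and, hVdef, Prod.ext_iff]
      constructor
      · rintro ⟨hy, hz, h2, h3, h4, h5⟩
        rw [hz] at hy
        rw [h2, h4, h5] at hy
        exact ⟨⟨h2, h3, h4, h5⟩, hz, hy⟩
      · rintro ⟨⟨h2, h3, h4, h5⟩, hz, hy⟩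
        rw [← h2, ← h4, ← h5] at hy
        rw [← hz] at hy
        exact ⟨hy, hz, h2, h3, h4, h5⟩
    rw [hset, key v.1 v.2.1 v.2.2.1 v.2.2.2 _ _ _ MeasurableSet.univ
      (hFm z t) (hGm z v)]
    simp only [Set.preimage_univ, measure_univ, mul_one]
    ring
  -- the slices of ℰT over 𝒯 have total mass 1
  have he1 : ∀ v : 𝒰 × 𝒲T × 𝒲TY × 𝒲Y,
      ∑ t' : 𝒯, μ (ET ⁻¹' {eT | fT (v.2.1, v.2.2.1, v.1, eT) = t'}) = 1 := by
    intro v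
    have hm : Measurable (fun ω => fT (v.2.1, v.2.2.1, v.1, ET ω)) :=
      hfT.comp (measurable_const.prodMk (measurable_const.prodMk
        (measurable_const.prodMk hET)))
    have := fd_partition μ (fun ω => fT (v.2.1, v.2.2.1, v.1, ET ω)) hm
      Set.univ MeasurableSet.univ
    simp only [measure_univ, Set.univ_inter] at this
    exact this.symm
  -- finiteness and positivity
  have hfinf : ∀ (z : 𝒵) (t' : 𝒯), μ (EZ ⁻¹' {eZ | fZ (t', eZ) = z}) ≠ ⊤ :=
    fun z t' => measure_ne_top μ _
  have hfinp : ∀ t' : 𝒯,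
      (∑ v : 𝒰 × 𝒲T × 𝒲TY × 𝒲Y,
          (μ (U ⁻¹' {v.1}) * μ (WT ⁻¹' {v.2.1}) * μ (WTY ⁻¹' {v.2.2.1})
            * μ (WY ⁻¹' {v.2.2.2}))
          * μ (ET ⁻¹' {eT | fT (v.2.1, v.2.2.1, v.1, eT) = t'})) ≠ ⊤ := by
    intro t'
    rw [← hPT t']
    exact measure_ne_top μ _
  have hpos' : ∀ (t' : 𝒯) (z : 𝒵),
      0 < (∑ v : 𝒰 × 𝒲T × 𝒲TY × 𝒲Y,
          (μ (U ⁻¹' {v.1}) * μ (WT ⁻¹' {v.2.1}) * μ (WTY ⁻¹' {v.2.2.1})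
            * μ (WY ⁻¹' {v.2.2.2}))
          * μ (ET ⁻¹' {eT | fT (v.2.1, v.2.2.1, v.1, eT) = t'}))
        * μ (EZ ⁻¹' {eZ | fZ (t', eZ) = z}) := by
    intro t' z
    rw [← hPTZ t' z]
    exact hpos t' z
  -- assemble
  rw [hL]
  simp only [condP, hPZT, hPY, hPTZ, hPT]
  exact fd_algebra
    (fun v : 𝒰 × 𝒲T × 𝒲TY × 𝒲Y =>
      μ (U ⁻¹' {v.1}) * μ (WT ⁻¹' {v.2.1}) * μ (WTY ⁻¹' {v.2.2.1})
        * μ (WY ⁻¹' {v.2.2.2}))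
    (fun t' v => μ (ET ⁻¹' {eT | fT (v.2.1, v.2.2.1, v.1, eT) = t'}))
    (fun z t' => μ (EZ ⁻¹' {eZ | fZ (t', eZ) = z}))
    (fun z v => μ (EY ⁻¹' {eY | fY (z, v.2.2.1, v.2.2.2, v.1, eY) = y}))
    hfinf hfinp he1 hpos' t
end
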